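/- arXiv:1307.5053 — 6 statements merged into one kernel-verified Lean document; each statement's English description precedes it below -/
import Mathlib

section
/- The set M = { log(2^k + 8m)/log(2^k) : k ∈ ℕ, k ≥ 2, m ∈ ℕ, 0 ≤ m ≤ 2·4^(k−2) − 2^k + 1 } is dense in the interval [1,2]. -/
/-!
Put `c = (2 ^ k) ^ x ∈ [2 ^ k, 4 ^ k]`, so that `x = log c / log (2 ^ k)`. The admissible numbers
`2 ^ k + 8 m` form a progression of step 8 running from `2 ^ k` to `4 ^ k - 7 · 2 ^ k + 8`, so the
largest one below `c` (or the last one) is within a factor `1 + 16 / 2 ^ k` of `c`. Hence its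
logarithm is within `16 / 2 ^ k` of `log c`, and dividing by `log (2 ^ k) ≥ 1` only helps.
-/

open Real

theorem log_sub_log_le_of_le_one_add_mul {a b δ : ℝ} (ha : 0 < a) (hab : a ≤ b)
    (hb : b ≤ (1 + δ) * a) : log b - log a ≤ δ := by
  rw [← log_div (by linarith) ha.ne']
  calc log (b / a) ≤ b / a - 1 := log_le_sub_one_of_pos (div_pos (by linarith) ha)
    _ ≤ δ := by rw [sub_le_iff_le_add', div_le_iff₀ ha]; linarith

theorem one_le_log_two_pow {k : ℕ} (hk : 2 ≤ k) : 1 ≤ log ((2 : ℝ) ^ k) := by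
  rw [le_log_iff_exp_le (by positivity)]
  calc exp 1 ≤ 2 ^ 2 := by linarith [exp_one_lt_d9]
    _ ≤ 2 ^ k := pow_le_pow_right₀ (by norm_num) hk

theorem exists_two_pow_add_eight_mul_near {k : ℕ} (hk : 4 ≤ k) {c : ℝ}
    (hc : c ∈ Set.Icc ((2 : ℝ) ^ k) (4 ^ k)) :
    ∃ m : ℕ, (m : ℤ) ≤ 2 * 4 ^ (k - 2) - 2 ^ k + 1 ∧
      (2 : ℝ) ^ k + 8 * m ≤ c ∧ c ≤ (1 + 16 / 2 ^ k) * (2 ^ k + 8 * m) := by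
  obtain ⟨j, rfl⟩ := Nat.exists_eq_add_of_le' hk
  set M : ℤ := 2 * 4 ^ (j + 4 - 2) - 2 ^ (j + 4) + 1 with hMdef
  have hM : M = 32 * (2 ^ j) ^ 2 - 16 * 2 ^ j + 1 := by
    rw [hMdef, show j + 4 - 2 = j + 2 by omega, show (4 : ℤ) = 2 ^ 2 by norm_num, ← pow_mul]
    ring
  have hMR : (M : ℝ) = 32 * (2 ^ j) ^ 2 - 16 * 2 ^ j + 1 := by rw [hM]; push_cast; ring
  rw [show (2 : ℝ) ^ (j + 4) = 16 * 2 ^ j by ring, show (4 : ℝ) ^ (j + 4) = 256 * (2 ^ j) ^ 2 by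
    rw [show (4 : ℝ) = 2 ^ 2 by norm_num, ← pow_mul]; ring] at *
  have ht : (1 : ℝ) ≤ 2 ^ j := one_le_pow₀ (by norm_num)
  generalize (2 : ℝ) ^ j = t at *
  obtain ⟨hc₁, hc₂⟩ := hc
  rw [show 1 + 16 / (16 * t) = (t + 1) / t by field_simp]
  by_cases hcM : (c - 16 * t) / 8 < M + 1
  · have hfloor := Nat.floor_le (show 0 ≤ (c - 16 * t) / 8 by linarith)
    have hfloor' := Nat.lt_floor_add_one ((c - 16 * t) / 8)
    refine ⟨⌊(c - 16 * t) / 8⌋₊, ?_, by linarith, ?_⟩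
    · have : ((⌊(c - 16 * t) / 8⌋₊ : ℤ) : ℝ) < ((M + 1 : ℤ) : ℝ) := by push_cast; linarith
      exact Int.lt_add_one_iff.mp (by exact_mod_cast this)
    · rw [div_mul_eq_mul_div, le_div_iff₀ (by linarith)]
      nlinarith
  · have hM0 : 0 ≤ M := by exact_mod_cast (show (0 : ℝ) ≤ M by rw [hMR]; nlinarith)
    refine ⟨M.toNat, (Int.toNat_of_nonneg hM0).le, ?_, ?_⟩
    all_goals
      rw [show ((M.toNat : ℕ) : ℝ) = M by exact_mod_cast Int.toNat_of_nonneg hM0]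
    · linarith
    · rw [div_mul_eq_mul_div, le_div_iff₀ (by linarith), hMR]
      nlinarith

theorem exists_four_le_and_div_two_pow_lt {ε : ℝ} (hε : 0 < ε) :
    ∃ k : ℕ, 4 ≤ k ∧ 16 / (2 : ℝ) ^ k < ε := by
  obtain ⟨n, hn⟩ := pow_unbounded_of_one_lt (16 / ε) (by norm_num : (1 : ℝ) < 2)
  refine ⟨max 4 n, le_max_left _ _, ?_⟩
  rw [div_lt_iff₀ (by positivity), ← div_lt_iff₀' hε]
  exact hn.trans_le (pow_le_pow_right₀ (by norm_num) (le_max_right _ _))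

/-- The set M = { log(2^k + 8m)/log(2^k) : k ≥ 2, 0 ≤ m ≤ 2·4^(k−2) − 2^k + 1 }
is dense in [1,2]. -/
theorem stmt2 :
    ∀ x ∈ Set.Icc (1 : ℝ) 2,
      x ∈ closure {y : ℝ | ∃ k m : ℕ, 2 ≤ k ∧
        (m : ℤ) ≤ 2 * 4 ^ (k - 2) - 2 ^ k + 1 ∧
        y = Real.log ((2 : ℝ) ^ k + 8 * m) / Real.log ((2 : ℝ) ^ k)} := by
  rintro x ⟨hx₁, hx₂⟩
  rw [Metric.mem_closure_iff]
  intro ε hε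
  obtain ⟨k, hk, hkε⟩ := exists_four_le_and_div_two_pow_lt hε
  have hL := one_le_log_two_pow (k := k) (by omega)
  set c := ((2 : ℝ) ^ k) ^ x
  have hc : c ∈ Set.Icc ((2 : ℝ) ^ k) (4 ^ k) := by
    have h1 : (1 : ℝ) ≤ 2 ^ k := one_le_pow₀ (by norm_num)
    constructor
    · simpa using rpow_le_rpow_of_exponent_le h1 hx₁
    · calc c ≤ ((2 : ℝ) ^ k) ^ (2 : ℝ) := rpow_le_rpow_of_exponent_le h1 hx₂
        _ = 4 ^ k := by rw [rpow_two, ← pow_mul, mul_comm, pow_mul]; norm_num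
  obtain ⟨m, hmM, hnc, hcn⟩ := exists_two_pow_add_eight_mul_near hk hc
  refine ⟨_, ⟨k, m, by omega, hmM, rfl⟩, ?_⟩
  have hx : x = log c / log (2 ^ k) := by
    rw [log_rpow (by positivity)]; field_simp
  have hlog := log_sub_log_le_of_le_one_add_mul (by positivity) hnc hcn
  have hgap : 0 ≤ log c - log (2 ^ k + 8 * m) := sub_nonneg.mpr (log_le_log (by positivity) hnc)
  rw [dist_eq, hx, ← sub_div, abs_div, abs_of_nonneg hgap, abs_of_pos (by linarith)]
  calc _ ≤ log c - log (2 ^ k + 8 * m) := div_le_self hgap hL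
    _ < ε := hlog.trans_lt hkε
end

section
/- Let F ⊂ ℝ be bounded and infinite with complementary interval lengths l₁ ≥ l₂ ≥ … (the lengths of the bounded connected components of the complement of the closure of F inside the smallest closed interval I containing F). Then for every ε > 0, the number of boundary points of the one-dimensional ε-parallel set F_ε = {x ∈ ℝ : dist(x,F) ≤ ε} satisfies #(∂F_ε) = 2 + 2·#{j : l_j > 2ε}. -/
/-!
The closure `K` of `F` is `[a, b]` with its bounded gaps `(p j, q j)` removed, which are
pairwise disjoint open intervals with endpoints in `K`. Hence the ε-parallel set is
`[a - ε, b + ε]` with the shrunken gaps `(p j + ε, q j - ε)` removed. Only the gaps longer than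
`2ε` leave a hole, and there are finitely many of them because their total length is at most
`b - a`; so the boundary consists of `a - ε`, `b + ε` and the two endpoints of each hole.
-/

open Metric Set
open scoped Function

section ConnectedComponentIn

variable {α : Type*} [TopologicalSpace α]

theorem closure_connectedComponentIn_inter_subset (F : Set α) (x : α) :
    closure (connectedComponentIn F x) ∩ F ⊆ connectedComponentIn F x := by
  rintro y ⟨hy, hyF⟩
  by_cases hx : x ∈ F
  · have hpre : IsPreconnected (insert y (connectedComponentIn F x)) :=
      isPreconnected_connectedComponentIn.subset_closure (subset_insert _ _)
        (insert_subset hy subset_closure)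
    exact hpre.subset_connectedComponentIn (mem_insert_of_mem _ (mem_connectedComponentIn hx))
      (insert_subset hyF (connectedComponentIn_subset _ _)) (mem_insert _ _)
  · simp [connectedComponentIn_eq_empty hx] at hy

theorem connectedComponentIn_disjoint_of_ne {F : Set α} {x y : α}
    (h : connectedComponentIn F x ≠ connectedComponentIn F y) :
    Disjoint (connectedComponentIn F x) (connectedComponentIn F y) :=
  disjoint_left.2 fun _ hzx hzy ↦
    h ((connectedComponentIn_eq hzx).trans (connectedComponentIn_eq hzy).symm)

end ConnectedComponentIn

theorem exists_connectedComponentIn_compl_eq_Ioo {K : Set ℝ} (hK : IsClosed K) {x : ℝ}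
    (hx : x ∉ K) (hbdd : Bornology.IsBounded (connectedComponentIn Kᶜ x)) :
    ∃ p q, p < q ∧ p ∈ K ∧ q ∈ K ∧ connectedComponentIn Kᶜ x = Ioo p q := by
  set C := connectedComponentIn Kᶜ x
  have hconn : IsConnected C := isConnected_connectedComponentIn_iff.2 hx
  have hC : C = Ioo (sInf C) (sSup C) :=
    (interior_Icc (a := sInf C) ▸ interior_maximal
      (subset_Icc_csInf_csSup hbdd.bddBelow hbdd.bddAbove)
      hK.isOpen_compl.connectedComponentIn).antisymm
    (hconn.Ioo_csInf_csSup_subset hbdd.bddBelow hbdd.bddAbove)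
  have hlt : sInf C < sSup C := nonempty_Ioo.1 (hC ▸ hconn.nonempty)
  have hend : ∀ y ∈ closure C, y ∉ C → y ∈ K := fun y hy hyC ↦ by
    by_contra hyK
    exact hyC (closure_connectedComponentIn_inter_subset _ _ ⟨hy, hyK⟩)
  refine ⟨_, _, hlt, hend _ (csInf_mem_closure hconn.nonempty hbdd.bddBelow) ?_,
    hend _ (csSup_mem_closure hconn.nonempty hbdd.bddAbove) ?_, hC⟩
  · exact fun h ↦ (hC.subset h).1.false
  · exact fun h ↦ (hC.subset h).2.false

theorem connectedComponentIn_compl_subset_Ioo {K : Set ℝ} {a b z : ℝ} (ha : a ∈ K)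
    (hb : b ∈ K) (hz : z ∈ Ioo a b) : connectedComponentIn Kᶜ z ⊆ Ioo a b := by
  intro y hy
  have hzC : z ∈ connectedComponentIn Kᶜ z :=
    mem_connectedComponentIn (connectedComponentIn_nonempty_iff.1 ⟨y, hy⟩)
  have hord := (isPreconnected_connectedComponentIn (x := z) (F := Kᶜ)).ordConnected
  have hnot : ∀ w ∈ K, w ∉ connectedComponentIn Kᶜ z := fun w hw hwC ↦
    connectedComponentIn_subset _ _ hwC hw
  constructor
  · by_contra! hya
    exact hnot a ha (hord.out hy hzC ⟨hya, hz.1.le⟩)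
  · by_contra! hyb
    exact hnot b hb (hord.out hzC hy ⟨hz.2.le, hyb⟩)

section FiniteGaps

variable {ι : Type*} {T : Set ι} {a b : ℝ} {c d : ι → ℝ}

theorem frontier_Icc_sdiff_biUnion_Ioo (hT : T.Finite) (hab : a ≤ b)
    (hcd : ∀ j ∈ T, a < c j ∧ c j < d j ∧ d j < b)
    (hdisj : T.PairwiseDisjoint fun j ↦ Icc (c j) (d j)) :
    frontier (Icc a b \ ⋃ j ∈ T, Ioo (c j) (d j)) = {a, b} ∪ ⋃ j ∈ T, {c j, d j} := by
  set X := Icc a b \ ⋃ j ∈ T, Ioo (c j) (d j)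
  have hint : interior X = Ioo a b \ ⋃ j ∈ T, Icc (c j) (d j) := by
    refine subset_antisymm (fun x hx ↦ ?_) ?_
    · refine ⟨interior_Icc (a := a) (b := b) ▸ interior_mono sdiff_subset hx, ?_⟩
      simp only [mem_iUnion₂, not_exists]
      intro j hj hxj
      have hsub : X ⊆ (Ioo (c j) (d j))ᶜ := fun y hy hyj ↦ hy.2 (mem_biUnion hj hyj)
      have := interior_mono hsub hx
      rw [interior_compl, closure_Ioo (hcd j hj).2.1.ne] at this
      exact this hxj
    · exact interior_maximal
        (sdiff_subset_sdiff Ioo_subset_Icc_self (iUnion₂_mono fun _ _ ↦ Ioo_subset_Icc_self))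
        (isOpen_Ioo.sdiff (hT.isClosed_biUnion fun _ _ ↦ isClosed_Icc))
  rw [(isClosed_Icc.sdiff (isOpen_biUnion fun _ _ ↦ isOpen_Ioo)).frontier_eq, hint]
  ext x
  simp only [mem_sdiff, mem_Icc, mem_Ioo, mem_iUnion₂, not_exists, not_and, mem_union,
    mem_insert_iff, mem_singleton_iff]
  have hsep : ∀ j ∈ T, ∀ k ∈ T, ∀ x ∈ Icc (c j) (d j), c k < x → x < d k → j = k :=
    fun j hj k hk x hx hck hdk ↦ by_contra fun hjk ↦
      disjoint_left.1 (hdisj hj hk hjk) hx ⟨hck.le, hdk.le⟩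
  constructor
  · rintro ⟨⟨⟨hax, hxb⟩, hgap⟩, hbd⟩
    by_cases hx : a < x ∧ x < b
    · obtain ⟨j, hj, hcj, hdj⟩ : ∃ j ∈ T, c j ≤ x ∧ x ≤ d j := by simpa using hbd hx
      refine Or.inr ⟨j, hj, ?_⟩
      by_contra! hne
      exact hgap j hj (hcj.lt_of_ne hne.1.symm) (hdj.lt_of_ne hne.2)
    · exact Or.inl (by by_contra! hne; exact hx ⟨hax.lt_of_ne hne.1.symm, hxb.lt_of_ne hne.2⟩)
  · rintro ((rfl | rfl) | ⟨j, hj, hx⟩)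
    · exact ⟨⟨⟨le_rfl, hab⟩, fun k hk hck ↦ absurd hck (hcd k hk).1.not_gt⟩,
        fun h ↦ absurd h.1 (lt_irrefl _)⟩
    · exact ⟨⟨⟨hab, le_rfl⟩, fun k hk _ hdk ↦ absurd hdk (hcd k hk).2.2.not_gt⟩,
        fun h ↦ absurd h.2 (lt_irrefl _)⟩
    · obtain ⟨hacj, hcdj, hdjb⟩ := hcd j hj
      have hxj : x ∈ Icc (c j) (d j) := by rcases hx with rfl | rfl <;> simp [hcdj.le]
      refine ⟨⟨⟨by linarith [hxj.1], by linarith [hxj.2]⟩, fun k hk hck hdk ↦ ?_⟩,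
        fun _ h ↦ h j hj hxj.1 hxj.2⟩
      obtain rfl := hsep j hj k hk x hxj hck hdk
      rcases hx with rfl | rfl <;> linarith

theorem ncard_pair_union_biUnion_pair (hT : T.Finite) (hab : a ≠ b)
    (hcd : ∀ j ∈ T, a < c j ∧ c j < d j ∧ d j < b)
    (hdisj : T.PairwiseDisjoint fun j ↦ Icc (c j) (d j)) :
    ({a, b} ∪ ⋃ j ∈ T, {c j, d j} : Set ℝ).ncard = 2 + 2 * T.ncard := by
  have hpair : T.PairwiseDisjoint fun j ↦ ({c j, d j} : Set ℝ) :=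
    hdisj.mono_on fun j hj ↦ pair_subset (left_mem_Icc.2 (hcd j hj).2.1.le)
      (right_mem_Icc.2 (hcd j hj).2.1.le)
  have hout : Disjoint ({a, b} : Set ℝ) (⋃ j ∈ T, {c j, d j}) := by
    simp only [disjoint_iUnion_right, disjoint_insert_left, disjoint_singleton_left,
      mem_insert_iff, mem_singleton_iff, not_or]
    intro j hj
    obtain ⟨h1, h2, h3⟩ := hcd j hj
    refine ⟨⟨?_, ?_⟩, ?_, ?_⟩ <;> intro h <;> linarith
  rw [ncard_union_eq hout (toFinite _) (hT.biUnion fun _ _ ↦ toFinite _), ncard_pair hab,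
    hT.ncard_biUnion (fun _ _ ↦ toFinite _) hpair,
    finsum_mem_congr rfl fun j hj ↦ ncard_pair (hcd j hj).2.1.ne, ← finsum_one,
    mul_finsum_mem' _ _ hT, mul_one]

end FiniteGaps

section Gaps

variable {ι : Type*} {p q : ι → ℝ}

theorem finite_setOf_lt_sub_of_pairwise_disjoint_Ioo
    (hdisj : Pairwise (Disjoint on fun j ↦ Ioo (p j) (q j)))
    (hbdd : Bornology.IsBounded (⋃ j, Ioo (p j) (q j))) {δ : ℝ} (hδ : 0 < δ) :
    {j | δ < q j - p j}.Finite := by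
  refine (MeasureTheory.Measure.finite_const_le_meas_of_disjoint_iUnion MeasureTheory.volume
    (ENNReal.ofReal_pos.2 hδ) (fun _ ↦ measurableSet_Ioo) hdisj hbdd.measure_lt_top.ne).subset ?_
  intro j hj
  rw [mem_ofPred_eq, Real.volume_Ioo]
  exact ENNReal.ofReal_le_ofReal (le_of_lt hj)

theorem cthickening_eq_Icc_sdiff_iUnion_Ioo {K : Set ℝ} (hK : IsCompact K) {a b : ℝ}
    (ha : IsLeast K a) (hb : IsGreatest K b) (hpK : ∀ j, p j ∈ K) (hqK : ∀ j, q j ∈ K)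
    (hgapK : ∀ j, Disjoint (Ioo (p j) (q j)) K) (hcover : Ioo a b \ K ⊆ ⋃ j, Ioo (p j) (q j))
    {ε : ℝ} (hε : 0 ≤ ε) :
    cthickening ε K = Icc (a - ε) (b + ε) \ ⋃ j, Ioo (p j + ε) (q j - ε) := by
  ext x
  simp only [hK.cthickening_eq_biUnion_closedBall hε, mem_closedBall,
    Real.dist_eq, abs_le, mem_sdiff, mem_Icc, mem_iUnion, mem_Ioo, exists_prop, not_exists,
    not_and, not_lt]
  constructor
  · rintro ⟨y, hyK, hxy⟩
    refine ⟨⟨by linarith [ha.2 hyK], by linarith [hb.2 hyK]⟩, fun j hj ↦ ?_⟩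
    by_contra! hx
    exact disjoint_left.1 (hgapK j) ⟨by linarith, by linarith⟩ hyK
  · rintro ⟨⟨hax, hxb⟩, hx⟩
    rcases le_or_gt x a with hxa | hxa
    · exact ⟨a, ha.1, by constructor <;> linarith⟩
    rcases le_or_gt b x with hbx | hbx
    · exact ⟨b, hb.1, by constructor <;> linarith⟩
    by_cases hxK : x ∈ K
    · exact ⟨x, hxK, by constructor <;> linarith⟩
    obtain ⟨j, hj⟩ := mem_iUnion.1 (hcover ⟨⟨hxa, hbx⟩, hxK⟩)
    rcases le_or_gt x (p j + ε) with hxp | hxp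
    · exact ⟨p j, hpK j, by constructor <;> linarith [hj.1]⟩
    · exact ⟨q j, hqK j, by constructor <;> linarith [hj.2, hx j hxp]⟩

theorem ncard_frontier_cthickening_of_gaps {K : Set ℝ}
    (hK : IsCompact K) {a b : ℝ} (ha : IsLeast K a) (hb : IsGreatest K b)
    (hpK : ∀ j, p j ∈ K) (hqK : ∀ j, q j ∈ K) (hgapK : ∀ j, Disjoint (Ioo (p j) (q j)) K)
    (hdisj : Pairwise (Disjoint on fun j ↦ Ioo (p j) (q j)))
    (hcover : Ioo a b \ K ⊆ ⋃ j, Ioo (p j) (q j)) {ε : ℝ} (hε : 0 < ε) :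
    (frontier (cthickening ε K)).ncard = 2 + 2 * {j | 2 * ε < q j - p j}.ncard := by
  set T := {j | 2 * ε < q j - p j}
  have hab : a ≤ b := ha.2 hb.1
  have hpa : ∀ j, a ≤ p j := fun j ↦ ha.2 (hpK j)
  have hqb : ∀ j, q j ≤ b := fun j ↦ hb.2 (hqK j)
  have hT : T.Finite := finite_setOf_lt_sub_of_pairwise_disjoint_Ioo hdisj
    ((isBounded_Icc a b).subset (iUnion_subset fun j ↦
      Ioo_subset_Icc_self.trans (Icc_subset_Icc (hpa j) (hqb j)))) (by positivity)
  have hcd : ∀ j ∈ T, a - ε < p j + ε ∧ p j + ε < q j - ε ∧ q j - ε < b + ε :=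
    fun j (hj : 2 * ε < q j - p j) ↦ ⟨by linarith [hpa j], by linarith, by linarith [hqb j]⟩
  have hdisjT : T.PairwiseDisjoint fun j ↦ Icc (p j + ε) (q j - ε) := fun j _ k _ hjk ↦
    (hdisj hjk).mono (Icc_subset_Ioo (by linarith) (by linarith))
      (Icc_subset_Ioo (by linarith) (by linarith))
  have hshrink : ⋃ j, Ioo (p j + ε) (q j - ε) = ⋃ j ∈ T, Ioo (p j + ε) (q j - ε) := by
    refine (iUnion_subset fun j x hx ↦ ?_).antisymm (iUnion₂_subset fun j _ ↦
      subset_iUnion (fun i ↦ Ioo (p i + ε) (q i - ε)) j)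
    exact mem_biUnion (show 2 * ε < q j - p j by linarith [hx.1, hx.2]) hx
  rw [cthickening_eq_Icc_sdiff_iUnion_Ioo hK ha hb hpK hqK hgapK hcover hε.le, hshrink,
    frontier_Icc_sdiff_biUnion_Ioo hT (by linarith) hcd hdisjT,
    ncard_pair_union_biUnion_pair hT (by linarith) hcd hdisjT]

end Gaps

theorem stmt4_general (F : Set ℝ) (hFb : Bornology.IsBounded F) (hFi : F.Infinite)
    (l : ℕ → ℝ) (e : ℕ → Set ℝ)
    (he_inj : Function.Injective e)
    (he_range : Set.range e =
      {U : Set ℝ | ∃ x ∈ (closure F)ᶜ,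
        U = connectedComponentIn (closure F)ᶜ x ∧ Bornology.IsBounded U})
    (hl : ∀ j, l j = Metric.diam (e j))
    (ε : ℝ) (hε : 0 < ε) :
    (frontier (Metric.cthickening ε F)).ncard =
      2 + 2 * {j : ℕ | 2 * ε < l j}.ncard := by
  set K := closure F
  have hK : IsCompact K := hFb.isCompact_closure
  have hne : K.Nonempty := hFi.nonempty.closure
  have hcomp (j : ℕ) :
      ∃ x ∈ Kᶜ, e j = connectedComponentIn Kᶜ x ∧ Bornology.IsBounded (e j) :=
    (he_range ▸ mem_range_self j :)
  choose x hxK hex hbdd using hcomp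
  have hdisj : Pairwise (Disjoint on e) := fun j k hjk ↦ by
    change Disjoint (e j) (e k)
    rw [hex j, hex k]
    exact connectedComponentIn_disjoint_of_ne (by rw [← hex j, ← hex k]; exact he_inj.ne hjk)
  have hcover : Ioo (sInf K) (sSup K) \ K ⊆ ⋃ j, e j := fun z hz ↦ by
    obtain ⟨j, hj⟩ : connectedComponentIn Kᶜ z ∈ range e := he_range ▸ ⟨z, hz.2, rfl,
      (isBounded_Ioo _ _).subset (connectedComponentIn_compl_subset_Ioo (hK.sInf_mem hne)
        (hK.sSup_mem hne) hz.1)⟩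
    exact mem_iUnion.2 ⟨j, hj ▸ mem_connectedComponentIn hz.2⟩
  choose p q hpq hpK hqK he using fun j ↦
    hex j ▸ exists_connectedComponentIn_compl_eq_Ioo isClosed_closure (hxK j) (hex j ▸ hbdd j)
  obtain rfl : e = fun j ↦ Ioo (p j) (q j) := funext he
  have hl' : l = fun j ↦ q j - p j := funext fun j ↦ by rw [hl, Real.diam_Ioo (hpq j).le]
  rw [← cthickening_closure, hl']
  exact ncard_frontier_cthickening_of_gaps hK (hK.isLeast_sInf hne) (hK.isGreatest_sSup hne)
    hpK hqK
    (fun j ↦ disjoint_compl_left.mono_left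
      ((hex j).trans_subset (connectedComponentIn_subset _ _)))
    hdisj hcover hε

/-- For a bounded infinite `F ⊆ ℝ` whose bounded complementary gaps (the bounded
connected components of the complement of the closure of `F`) are enumerated by
`e : ℕ → Set ℝ` with non-increasing lengths `l j = diam (e j)`, for every `ε > 0`
the boundary of the closed ε-parallel set of `F` has exactly
`2 + 2·#{j : l j > 2ε}` points. -/
theorem stmt4 (F : Set ℝ) (hFb : Bornology.IsBounded F) (hFi : F.Infinite)
    (l : ℕ → ℝ) (e : ℕ → Set ℝ)
    (he_inj : Function.Injective e)
    (he_range : Set.range e =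
      {U : Set ℝ | ∃ x ∈ (closure F)ᶜ,
        U = connectedComponentIn (closure F)ᶜ x ∧ Bornology.IsBounded U})
    (hl : ∀ j, l j = Metric.diam (e j))
    (hmono : Antitone l)
    (ε : ℝ) (hε : 0 < ε) :
    (frontier (Metric.cthickening ε F)).ncard =
      2 + 2 * {j : ℕ | 2 * ε < l j}.ncard :=
  stmt4_general F hFb hFi l e he_inj he_range hl ε hε
end

section
/- Let d ≥ 2 and let y, z be two points at distance l with 0 < l ≤ 2ε. If S ⊂ ∂B^d(0,ε) is contained in the slab [0, l/2] × ℝ^{d−1}, then the volume of the cone K(S) = ∪{[0,s] : s ∈ S} satisfies V_d(K(S)) ≤ (l/2)·α_{d−1}·ε^{d−1}, and consequently V_d(K(S))/V_d(B^d(0,ε)) ≤ (α_{d−1}/α_d)·(l/(2ε)). -/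
open Metric Set MeasureTheory

/-- Symmetric-cone estimate: if `0 < l ≤ 2ε` and `S` is a subset of the sphere of
radius `ε` in `ℝ^d` (`d ≥ 2`) contained in the slab where the first coordinate lies
in `[0, l/2]`, then the cone `K(S) = ∪{[0,s] : s ∈ S}` satisfies
`V_d(K(S)) ≤ (l/2)·α_{d−1}·ε^{d−1}` and consequently
`V_d(K(S))/V_d(B^d(0,ε)) ≤ (α_{d−1}/α_d)·(l/(2ε))`. -/
theorem stmt7 {d : ℕ} (hd : 2 ≤ d) (ε l : ℝ) (hε : 0 < ε) (hl : 0 < l)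
    (hl2 : l ≤ 2 * ε) (S : Set (EuclideanSpace ℝ (Fin d)))
    (hS : S ⊆ Metric.sphere 0 ε)
    (hslab : ∀ x ∈ S, x ⟨0, by omega⟩ ∈ Set.Icc (0 : ℝ) (l / 2)) :
    volume (⋃ s ∈ S, segment ℝ 0 s) ≤
        ENNReal.ofReal (l / 2 * ε ^ (d - 1)) *
          volume (Metric.closedBall (0 : EuclideanSpace ℝ (Fin (d - 1))) 1) ∧
      volume (⋃ s ∈ S, segment ℝ 0 s) /
          volume (Metric.closedBall (0 : EuclideanSpace ℝ (Fin d)) ε) ≤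
        (volume (Metric.closedBall (0 : EuclideanSpace ℝ (Fin (d - 1))) 1) /
            volume (Metric.closedBall (0 : EuclideanSpace ℝ (Fin d)) 1)) *
          ENNReal.ofReal (l / (2 * ε)) := by
  obtain ⟨n, rfl⟩ : ∃ n, d = n + 1 := ⟨d - 1, by omega⟩
  simp only [Nat.add_sub_cancel] at *
  -- abbreviations
  set K : Set (EuclideanSpace ℝ (Fin (n + 1))) := ⋃ s ∈ S, segment ℝ 0 s with hK
  have hn : 1 ≤ n := by omega
  -- the equivalences
  set φ := (MeasurableEquiv.toLp 2 (Fin (n + 1) → ℝ)).symm with hφ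
  set ψ := MeasurableEquiv.piFinSuccAbove (fun _ : Fin (n + 1) => ℝ) 0 with hψ
  set e := (MeasurableEquiv.toLp 2 (Fin n → ℝ)).symm with he
  set B' : Set (Fin n → ℝ) := ⇑e.symm ⁻¹' Metric.closedBall (0 : EuclideanSpace ℝ (Fin n)) ε
    with hB'
  set T : Set (ℝ × (Fin n → ℝ)) := Set.Icc (0 : ℝ) (l / 2) ×ˢ B' with hT
  have hεle : 0 ≤ ε := hε.le
  have hsub : K ⊆ ⇑φ ⁻¹' (⇑ψ ⁻¹' T) := by
    intro x hx
    simp only [hK, Set.mem_iUnion] at hx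
    obtain ⟨s, hsS, hxs⟩ := hx
    rw [segment_eq_image] at hxs
    obtain ⟨t, ht, rfl⟩ := hxs
    simp only [smul_zero, zero_add] at *
    have hs0 := hslab s hsS
    have hsnorm : ‖s‖ = ε := by
      have := hS hsS
      simpa [mem_sphere_iff_norm] using this
    constructor
    · -- first coordinate
      show t * s 0 ∈ Set.Icc (0 : ℝ) (l / 2)
      constructor
      · exact mul_nonneg ht.1 hs0.1
      · calc t * s 0 ≤ 1 * s 0 := mul_le_mul_of_nonneg_right ht.2 hs0.1
          _ = s 0 := one_mul _
          _ ≤ l / 2 := hs0.2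
    · -- other coordinates
      show e.symm (fun j => (t • s) (Fin.succAbove 0 j)) ∈
        Metric.closedBall (0 : EuclideanSpace ℝ (Fin n)) ε
      rw [Metric.mem_closedBall, dist_zero_right, EuclideanSpace.norm_eq]
      have hsum : (∑ j : Fin n, ‖(t • s) (Fin.succAbove 0 j)‖ ^ 2) ≤
          ∑ i : Fin (n + 1), ‖(t • s) i‖ ^ 2 := by
        rw [Fin.sum_univ_succ]
        have heq : ∑ j : Fin n, ‖(t • s) (Fin.succAbove 0 j)‖ ^ 2 =
            ∑ j : Fin n, ‖(t • s) (Fin.succ j)‖ ^ 2 := by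
          refine Finset.sum_congr rfl fun j _ => ?_
          rw [Fin.succAbove_zero]
        rw [heq]
        have h0 : (0:ℝ) ≤ ‖(t • s) 0‖ ^ 2 := sq_nonneg _
        linarith
      have h1 : Real.sqrt (∑ j : Fin n, ‖(t • s) (Fin.succAbove 0 j)‖ ^ 2) ≤
          Real.sqrt (∑ i : Fin (n + 1), ‖(t • s) i‖ ^ 2) := Real.sqrt_le_sqrt hsum
      have h2 : Real.sqrt (∑ i : Fin (n + 1), ‖(t • s) i‖ ^ 2) = ‖t • s‖ :=
        (EuclideanSpace.norm_eq _).symm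
      have h3 : ‖t • s‖ ≤ ε := by
        rw [norm_smul, hsnorm, Real.norm_eq_abs, abs_of_nonneg ht.1]
        exact mul_le_of_le_one_left hε.le ht.2
      calc Real.sqrt (∑ j : Fin n, ‖e.symm (fun j => (t • s) (Fin.succAbove 0 j)) j‖ ^ 2)
          = Real.sqrt (∑ j : Fin n, ‖(t • s) (Fin.succAbove 0 j)‖ ^ 2) := rfl
        _ ≤ ε := h1.trans (h2 ▸ h3)
  have hBmeas : NullMeasurableSet (Metric.closedBall (0 : EuclideanSpace ℝ (Fin n)) ε)
      (volume) := measurableSet_closedBall.nullMeasurableSet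
  have hB'vol : volume B' = volume (Metric.closedBall (0 : EuclideanSpace ℝ (Fin n)) ε) :=
    ((EuclideanSpace.volume_preserving_symm_measurableEquiv_toLp (Fin n)).symm _).measure_preimage hBmeas
  have hTmeas : NullMeasurableSet T volume := by
    apply MeasurableSet.nullMeasurableSet
    exact (measurableSet_Icc).prod (e.symm.measurable measurableSet_closedBall)
  have hTvol : volume T = ENNReal.ofReal (l / 2) *
      volume (Metric.closedBall (0 : EuclideanSpace ℝ (Fin n)) ε) := by
    rw [hT, ← hB'vol]
    rw [show (volume : Measure (ℝ × (Fin n → ℝ))) = (volume : Measure ℝ).prod volume from rfl]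
    rw [Measure.prod_prod, Real.volume_Icc]
    norm_num
  have hpre : volume (⇑φ ⁻¹' (⇑ψ ⁻¹' T)) = volume T := by
    have h1 : volume (⇑ψ ⁻¹' T) = volume T :=
      (volume_preserving_piFinSuccAbove (fun _ : Fin (n + 1) => ℝ) 0).measure_preimage hTmeas
    have hψTmeas : NullMeasurableSet (⇑ψ ⁻¹' T) volume := by
      apply MeasurableSet.nullMeasurableSet
      exact ψ.measurable ((measurableSet_Icc).prod (e.symm.measurable measurableSet_closedBall))
    rw [(EuclideanSpace.volume_preserving_symm_measurableEquiv_toLp (Fin (n + 1))).measure_preimage hψTmeas,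
      h1]
  have hball : volume (Metric.closedBall (0 : EuclideanSpace ℝ (Fin n)) ε) =
      ENNReal.ofReal (ε ^ n) * volume (Metric.closedBall (0 : EuclideanSpace ℝ (Fin n)) 1) := by
    rw [Measure.addHaar_closedBall' volume _ hεle, finrank_euclideanSpace_fin]
  have part1 : volume K ≤ ENNReal.ofReal (l / 2 * ε ^ n) *
      volume (Metric.closedBall (0 : EuclideanSpace ℝ (Fin n)) 1) := by
    calc volume K ≤ volume (⇑φ ⁻¹' (⇑ψ ⁻¹' T)) := measure_mono hsub
      _ = volume T := hpre
      _ = ENNReal.ofReal (l / 2) * (ENNReal.ofReal (ε ^ n) *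
          volume (Metric.closedBall (0 : EuclideanSpace ℝ (Fin n)) 1)) := by rw [hTvol, hball]
      _ = ENNReal.ofReal (l / 2 * ε ^ n) *
          volume (Metric.closedBall (0 : EuclideanSpace ℝ (Fin n)) 1) := by
        rw [← mul_assoc, ← ENNReal.ofReal_mul (by positivity)]
  refine ⟨part1, ?_⟩
  -- second part
  set V1 := volume (Metric.closedBall (0 : EuclideanSpace ℝ (Fin n)) 1) with hV1
  set Vd := volume (Metric.closedBall (0 : EuclideanSpace ℝ (Fin (n + 1))) 1) with hVd
  have hballd : volume (Metric.closedBall (0 : EuclideanSpace ℝ (Fin (n + 1))) ε) =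
      ENNReal.ofReal (ε ^ (n + 1)) * Vd := by
    rw [Measure.addHaar_closedBall' volume _ hεle, finrank_euclideanSpace_fin]
  have hfact : ENNReal.ofReal (l / 2 * ε ^ n) =
      ENNReal.ofReal (ε ^ (n + 1)) * ENNReal.ofReal (l / (2 * ε)) := by
    rw [← ENNReal.ofReal_mul (by positivity)]
    congr 1
    field_simp
    ring
  have hne : ENNReal.ofReal (ε ^ (n + 1)) ≠ 0 := by
    simp [ENNReal.ofReal_eq_zero]; positivity
  have hnt : ENNReal.ofReal (ε ^ (n + 1)) ≠ ⊤ := ENNReal.ofReal_ne_top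
  calc volume K / volume (Metric.closedBall (0 : EuclideanSpace ℝ (Fin (n + 1))) ε)
      ≤ (ENNReal.ofReal (l / 2 * ε ^ n) * V1) /
        volume (Metric.closedBall (0 : EuclideanSpace ℝ (Fin (n + 1))) ε) :=
        ENNReal.div_le_div_right part1 _
    _ = (ENNReal.ofReal (ε ^ (n + 1)) * (ENNReal.ofReal (l / (2 * ε)) * V1)) /
        (ENNReal.ofReal (ε ^ (n + 1)) * Vd) := by rw [hballd, hfact, mul_assoc]
    _ = (ENNReal.ofReal (l / (2 * ε)) * V1) / Vd := ENNReal.mul_div_mul_left _ _ hne hnt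
    _ = (V1 / Vd) * ENNReal.ofReal (l / (2 * ε)) := by
        simp only [div_eq_mul_inv]; ring
end

section
/- Let S₁,…,S_N : ℝ^d → ℝ^d be contracting similarities generating a self-similar set K satisfying the strong open set condition with feasible open set O (so ∪ᵢ SᵢO ⊆ O, the SᵢO are pairwise disjoint, and K ∩ O ≠ ∅). If there exist a point x ∈ K, ε > 0 and a closed cube C ⊂ B(x,ε) such that the interior of C meets K and C ∩ K is similar to [0,1]^k × P for some P ⊂ ℝ^{d−k}, then for every y ∈ K and every δ > 0 there exist a closed cube C′ ⊂ B(y,δ) with interior meeting K such that C′ ∩ K is similar to [0,1]^k × P′ for some P′ ⊂ ℝ^{d−k}. -/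
open Metric Set

/-- A similarity between metric spaces: a map scaling all distances by a fixed
positive ratio. -/
def IsSimilarity {α β : Type*} [MetricSpace α] [MetricSpace β] (f : α → β) : Prop :=
  ∃ r : ℝ, 0 < r ∧ ∀ x y, dist (f x) (f y) = r * dist x y

/-- Two sets (in possibly different metric spaces) are similar if a similarity maps
one onto the other. -/
def SimilarSets {α β : Type*} [MetricSpace α] [MetricSpace β]
    (A : Set α) (B : Set β) : Prop :=
  ∃ f : α → β, IsSimilarity f ∧ f '' A = B

/-- The unit cube `[0,1]^d` in `ℝ^d`. -/
def unitCube (d : ℕ) : Set (EuclideanSpace ℝ (Fin d)) :=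
  {x | ∀ i, x i ∈ Set.Icc (0 : ℝ) 1}

/-- A closed cube in `ℝ^d`: a similar copy of the unit cube. -/
def IsClosedCube {d : ℕ} (C : Set (EuclideanSpace ℝ (Fin d))) : Prop :=
  SimilarSets (unitCube d) C

/-- The product set `[0,1]^k × P ⊆ ℝ^k × ℝ^m`, with the Euclidean (L²) product
metric. -/
def cubeProd (k m : ℕ) (P : Set (EuclideanSpace ℝ (Fin m))) :
    Set (WithLp 2 (EuclideanSpace ℝ (Fin k) × EuclideanSpace ℝ (Fin m))) :=
  (WithLp.equiv 2 (EuclideanSpace ℝ (Fin k) × EuclideanSpace ℝ (Fin m))).symm ''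
    (unitCube k ×ˢ P)

/-- `A` is a `k`-flat set in `ℝ^d`: it is similar to `[0,1]^k × P` for some
`P ⊆ ℝ^{d−k}`. -/
def IsKFlatSet (d k : ℕ) (A : Set (EuclideanSpace ℝ (Fin d))) : Prop :=
  ∃ P : Set (EuclideanSpace ℝ (Fin (d - k))), SimilarSets A (cubeProd k (d - k) P)

/-!
Fix `z ∈ K ∩ O` and a ball `U = B(z, ρ) ⊆ O`. The cylinder maps `S_σ = S_{σ₁} ∘ ⋯ ∘ S_{σₙ}`
contract uniformly and every point of `K` lies in cylinders `S_σ(K)` of every level, so some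
`S_τ(U)` fits inside `C` around a point of `C° ∩ K`. There the flatness of `C ∩ K` gives a small
cube `D ⊆ S_τ(U)` with `D ∩ K` flat: a small box cut out of `[0,1]^k × P` is again of that form.
The strong open set condition gives `K ∩ S_σ(U) = S_σ(K ∩ U)`, so `S_τ⁻¹` carries `D` to a flat
cube `D₀ ⊆ U`, and for `y ∈ K` a cylinder `S_σ(U) ⊆ B(y, δ)` carries `D₀` to the cube sought.
-/

open Module Topology Filter Bornology NNReal

local notation "W[" k ", " m "]" => WithLp 2 (EuclideanSpace ℝ (Fin k) × EuclideanSpace ℝ (Fin m))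

section Similarity

variable {α β γ : Type*} [MetricSpace α] [MetricSpace β] [MetricSpace γ]

theorem IsSimilarity.id : IsSimilarity (id : α → α) :=
  ⟨1, one_pos, fun _ _ => (one_mul _).symm⟩

theorem IsSimilarity.comp {g : β → γ} {f : α → β} (hg : IsSimilarity g) (hf : IsSimilarity f) :
    IsSimilarity (g ∘ f) := by
  obtain ⟨r, hr, hg⟩ := hg
  obtain ⟨t, ht, hf⟩ := hf
  exact ⟨r * t, mul_pos hr ht, fun x y => by simp only [Function.comp, hg, hf, mul_assoc]⟩

theorem IsSimilarity.injective {f : α → β} (hf : IsSimilarity f) : Function.Injective f := by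
  obtain ⟨r, hr, hf⟩ := hf
  intro x y hxy
  simpa [hxy, hr.ne'] using hf x y

theorem Isometry.isSimilarity {f : α → β} (hf : Isometry f) : IsSimilarity f :=
  ⟨1, one_pos, fun x y => by rw [hf.dist_eq, one_mul]⟩

theorem SimilarSets.image {f : α → β} (hf : IsSimilarity f) (A : Set α) : SimilarSets A (f '' A) :=
  ⟨f, hf, rfl⟩

theorem SimilarSets.trans {A : Set α} {B : Set β} {C : Set γ} (hAB : SimilarSets A B)
    (hBC : SimilarSets B C) : SimilarSets A C := by
  obtain ⟨f, hf, rfl⟩ := hAB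
  obtain ⟨g, hg, rfl⟩ := hBC
  exact ⟨g ∘ f, hg.comp hf, image_comp g f A⟩

end Similarity

section FiniteDimensional

variable {E F : Type*} [NormedAddCommGroup E] [NormedSpace ℝ E] [FiniteDimensional ℝ E]
  [NormedAddCommGroup F] [NormedSpace ℝ F] [FiniteDimensional ℝ F] [StrictConvexSpace ℝ F]

/-- Into a strictly convex space a similarity is a scaled affine isometry, hence onto when the
dimensions agree. -/
theorem IsSimilarity.exists_homeomorph {f : E → F} (hf : IsSimilarity f)
    (hEF : finrank ℝ E = finrank ℝ F) : ∃ φ : E ≃ₜ F, ⇑φ = f ∧ IsSimilarity φ.symm := by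
  obtain ⟨r, hr, hfr⟩ := hf
  have hiso : Isometry (r⁻¹ • f) := Isometry.of_dist_eq fun x y => by
    rw [Pi.smul_apply, Pi.smul_apply, dist_smul₀, hfr, Real.norm_eq_abs, abs_of_pos (inv_pos.2 hr),
      inv_mul_cancel_left₀ hr.ne']
  let _ : Inhabited E := ⟨0⟩
  let e : E ≃ᵃⁱ[ℝ] F := hiso.affineIsometryOfStrictConvexSpace.toAffineIsometryEquiv hEF
  refine ⟨e.toHomeomorph.trans (Homeomorph.smulOfNeZero r hr.ne'), funext fun x => ?_,
    r⁻¹, inv_pos.2 hr, fun x y => ?_⟩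
  · simp [e, smul_inv_smul₀ hr.ne']
  · simp [e, dist_smul₀, abs_of_pos hr]

theorem IsSimilarity.isOpenEmbedding {f : E → F} (hf : IsSimilarity f)
    (hEF : finrank ℝ E = finrank ℝ F) : IsOpenEmbedding f := by
  obtain ⟨φ, rfl, -⟩ := hf.exists_homeomorph hEF
  exact φ.isOpenEmbedding

theorem SimilarSets.symm {A : Set E} {B : Set F} (h : SimilarSets A B)
    (hEF : finrank ℝ E = finrank ℝ F) : SimilarSets B A := by
  obtain ⟨f, hf, rfl⟩ := h
  obtain ⟨φ, rfl, hφ⟩ := hf.exists_homeomorph hEF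
  exact ⟨φ.symm, hφ, φ.toEquiv.symm_image_image A⟩

end FiniteDimensional

theorem IsKFlatSet.of_similarSets {d k : ℕ} {A B : Set (EuclideanSpace ℝ (Fin d))}
    (hB : IsKFlatSet d k B) (hAB : SimilarSets A B) : IsKFlatSet d k A :=
  let ⟨P, hP⟩ := hB
  ⟨P, hAB.trans hP⟩

section UnitCube

variable {d k m : ℕ}

noncomputable def cubeCenter (d : ℕ) : EuclideanSpace ℝ (Fin d) :=
  WithLp.toLp 2 fun _ => 2⁻¹

theorem convex_unitCube : Convex ℝ (unitCube d) := by
  intro x hx y hy a b ha hb hab i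
  have hxi := hx i
  have hyi := hy i
  simp only [PiLp.add_apply, PiLp.smul_apply, smul_eq_mul, mem_Icc] at hxi hyi ⊢
  constructor <;> nlinarith

theorem dist_le_sqrt_of_mem_unitCube {x y : EuclideanSpace ℝ (Fin d)} (hx : x ∈ unitCube d)
    (hy : y ∈ unitCube d) : dist x y ≤ √d := by
  rw [EuclideanSpace.dist_eq]
  gcongr
  calc ∑ i, dist (x i) (y i) ^ 2 ≤ ∑ _i : Fin d, (1 : ℝ) :=
        Finset.sum_le_sum fun i _ =>
          pow_le_one₀ dist_nonneg (Real.dist_le_of_mem_Icc_01 (hx i) (hy i))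
    _ = d := by simp

theorem cubeCenter_mem_interior_unitCube : cubeCenter d ∈ interior (unitCube d) := by
  refine mem_interior.2
    ⟨ball (cubeCenter d) 2⁻¹, fun x hx i => ?_, isOpen_ball, mem_ball_self (by norm_num)⟩
  have hxi : |x i - 2⁻¹| < 2⁻¹ := (PiLp.dist_apply_le x (cubeCenter d) i).trans_lt hx
  rw [abs_lt] at hxi
  constructor <;> linarith [hxi.1, hxi.2]

theorem cubeCenter_mem_unitCube : cubeCenter d ∈ unitCube d :=
  interior_subset cubeCenter_mem_interior_unitCube

theorem mem_cubeProd {P : Set (EuclideanSpace ℝ (Fin m))} {q : W[k, m]} :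
    q ∈ cubeProd k m P ↔ q.fst ∈ unitCube k ∧ q.snd ∈ P := by
  simp only [cubeProd, Equiv.image_eq_preimage_symm]
  rfl

noncomputable def splitEquiv (h : d = k + m) : EuclideanSpace ℝ (Fin d) ≃ₗᵢ[ℝ] W[k, m] :=
  (LinearIsometryEquiv.piLpCongrLeft 2 ℝ ℝ ((finCongr h).trans finSumFinEquiv.symm)).trans
    (PiLp.sumPiLpEquivProdLpPiLp 2 fun _ => ℝ)

theorem splitEquiv_fst (h : d = k + m) (x : EuclideanSpace ℝ (Fin d)) (i : Fin k) :
    (splitEquiv h x).fst i = x (Fin.cast h.symm (Fin.castAdd m i)) :=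
  rfl

theorem splitEquiv_snd (h : d = k + m) (x : EuclideanSpace ℝ (Fin d)) (j : Fin m) :
    (splitEquiv h x).snd j = x (Fin.cast h.symm (Fin.natAdd k j)) :=
  rfl

theorem image_splitEquiv_unitCube (h : d = k + m) :
    splitEquiv h '' unitCube d = cubeProd k m (unitCube m) := by
  subst h
  ext q
  obtain ⟨x, rfl⟩ := (splitEquiv rfl).surjective q
  rw [(splitEquiv rfl).injective.mem_set_image, mem_cubeProd]
  simp only [unitCube, mem_ofPred_eq, splitEquiv_fst, splitEquiv_snd, Fin.cast_eq_self]
  exact Fin.forall_fin_add _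

theorem splitEquiv_cubeCenter_snd (h : d = k + m) :
    (splitEquiv h (cubeCenter d)).snd = cubeCenter m :=
  rfl

end UnitCube

section Box

variable {k m : ℕ} {P : Set (EuclideanSpace ℝ (Fin m))} {p q : W[k, m]} {s : ℝ}

/-- Maps the unit cube of `ℝ^k × ℝ^m` onto a box of side `s` through `p`; the anchor
`(p.fst, cubeCenter m)` is chosen so that the first factor of the box stays in `[0,1]^k`. -/
noncomputable def boxMap (p : W[k, m]) (s : ℝ) (q : W[k, m]) : W[k, m] :=
  p + s • (q - WithLp.toLp 2 (p.fst, cubeCenter m))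

theorem boxMap_anchor : boxMap p s (WithLp.toLp 2 (p.fst, cubeCenter m)) = p := by
  simp [boxMap]

theorem dist_boxMap (hs : 0 ≤ s) (q q' : W[k, m]) :
    dist (boxMap p s q) (boxMap p s q') = s * dist q q' := by
  simp [boxMap, dist_smul₀, abs_of_nonneg hs]

theorem boxMap_mem_cubeProd_iff (hp : p.fst ∈ unitCube k) (hs : s ∈ Icc 0 1)
    (hq : q.fst ∈ unitCube k) :
    boxMap p s q ∈ cubeProd k m P ↔ p.snd + s • (q.snd - cubeCenter m) ∈ P := by
  have hfst : (boxMap p s q).fst = p.fst + s • (q.fst - p.fst) := by simp [boxMap]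
  have hsnd : (boxMap p s q).snd = p.snd + s • (q.snd - cubeCenter m) := by simp [boxMap]
  rw [mem_cubeProd, hfst, hsnd]
  exact and_iff_right (convex_unitCube.add_smul_sub_mem hp hq hs)

theorem image_boxMap_inter_cubeProd (hp : p.fst ∈ unitCube k) (hs : s ∈ Icc 0 1) :
    boxMap p s '' cubeProd k m (unitCube m) ∩ cubeProd k m P =
      boxMap p s ''
        cubeProd k m (unitCube m ∩ (fun v => p.snd + s • (v - cubeCenter m)) ⁻¹' P) := by
  rw [← image_inter_preimage]
  congr 1
  ext q
  simp only [mem_inter_iff, mem_preimage, mem_cubeProd (q := q)]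
  constructor
  · rintro ⟨⟨hq1, hq2⟩, hq⟩
    exact ⟨hq1, hq2, (boxMap_mem_cubeProd_iff hp hs hq1).1 hq⟩
  · rintro ⟨hq1, hq2, hq⟩
    exact ⟨⟨hq1, hq2⟩, (boxMap_mem_cubeProd_iff hp hs hq1).2 hq⟩

end Box

def IsFlatCube {d : ℕ} (k : ℕ) (K C : Set (EuclideanSpace ℝ (Fin d))) : Prop :=
  IsClosedCube C ∧ (interior C ∩ K).Nonempty ∧ IsKFlatSet d k (C ∩ K)

section FlatCube

variable {d k : ℕ} {K C D : Set (EuclideanSpace ℝ (Fin d))}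

theorem IsFlatCube.of_subset (h : IsFlatCube k (C ∩ K) D) (hD : D ⊆ C) : IsFlatCube k K D := by
  obtain ⟨hcube, hint, hflat⟩ := h
  have hDK : D ∩ (C ∩ K) = D ∩ K := by rw [← inter_assoc, inter_eq_left.2 hD]
  exact ⟨hcube, hint.mono (inter_subset_inter_right _ inter_subset_right), hDK ▸ hflat⟩

theorem IsFlatCube.image {K' : Set (EuclideanSpace ℝ (Fin d))} (hC : IsFlatCube k K C)
    {f : EuclideanSpace ℝ (Fin d) → EuclideanSpace ℝ (Fin d)} (hf : IsSimilarity f)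
    (hfK : f '' (C ∩ K) = f '' C ∩ K') : IsFlatCube k K' (f '' C) := by
  obtain ⟨⟨g, hg, rfl⟩, ⟨x, hxC, hxK⟩, hflat⟩ := hC
  have hfx : f x ∈ f '' (g '' unitCube d) ∩ K' :=
    hfK ▸ mem_image_of_mem f ⟨interior_subset hxC, hxK⟩
  refine ⟨⟨f ∘ g, hf.comp hg, image_comp f g _⟩, ⟨f x, ?_, hfx.2⟩, ?_⟩
  · exact (hf.isOpenEmbedding rfl).isOpenMap.image_interior_subset _ (mem_image_of_mem f hxC)
  · rw [← hfK]
    exact hflat.of_similarSets ((SimilarSets.image hf _).symm rfl)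

end FlatCube

theorem isFlatCube_image_boxMap {d k : ℕ} (hkd : k ≤ d)
    {φ : EuclideanSpace ℝ (Fin d) ≃ₜ W[k, d - k]} (hφ : IsSimilarity φ.symm)
    {P : Set (EuclideanSpace ℝ (Fin (d - k)))} {p : W[k, d - k]} (hp : p ∈ cubeProd k (d - k) P)
    {s : ℝ} (hs0 : 0 < s) (hs1 : s ≤ 1) :
    IsFlatCube k (φ.symm '' cubeProd k (d - k) P)
      ((φ.symm ∘ boxMap p s ∘ splitEquiv (Nat.add_sub_of_le hkd).symm) '' unitCube d) := by
  set e := splitEquiv (Nat.add_sub_of_le hkd).symm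
  have hs : s ∈ Icc 0 1 := ⟨hs0.le, hs1⟩
  have hg : IsSimilarity (boxMap p s) := ⟨s, hs0, dist_boxMap hs0.le⟩
  have hh : IsSimilarity (φ.symm ∘ boxMap p s ∘ e) := hφ.comp (hg.comp e.isometry.isSimilarity)
  have hec : e (cubeCenter d) ∈ cubeProd k (d - k) (unitCube (d - k)) :=
    image_splitEquiv_unitCube _ ▸ mem_image_of_mem e cubeCenter_mem_unitCube
  refine ⟨⟨_, hh, rfl⟩, ⟨_, (hh.isOpenEmbedding rfl).isOpenMap.image_interior_subset _
    (mem_image_of_mem _ cubeCenter_mem_interior_unitCube), mem_image_of_mem _ ?_⟩, ?_⟩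
  · refine (boxMap_mem_cubeProd_iff (mem_cubeProd.1 hp).1 hs (mem_cubeProd.1 hec).1).2 ?_
    rw [splitEquiv_cubeCenter_snd, sub_self, smul_zero, add_zero]
    exact (mem_cubeProd.1 hp).2
  · rw [image_comp, image_comp, image_splitEquiv_unitCube, ← image_inter φ.symm.injective,
      image_boxMap_inter_cubeProd (mem_cubeProd.1 hp).1 hs, ← image_comp]
    exact ⟨_, (SimilarSets.image (hφ.comp hg) _).symm e.toLinearEquiv.finrank_eq.symm⟩

theorem IsKFlatSet.exists_isFlatCube_subset_closedBall {d k : ℕ} (hkd : k ≤ d)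
    {A : Set (EuclideanSpace ℝ (Fin d))} (hA : IsKFlatSet d k A) {ζ : EuclideanSpace ℝ (Fin d)}
    (hζ : ζ ∈ A) {t : ℝ} (ht : 0 < t) : ∃ D, IsFlatCube k A D ∧ D ⊆ closedBall ζ t := by
  obtain ⟨P, f, hf, hfA⟩ := hA
  set e := splitEquiv (Nat.add_sub_of_le hkd).symm
  obtain ⟨φ, rfl, r, hr, hφ⟩ := hf.exists_homeomorph e.toLinearEquiv.finrank_eq
  have hA : A = φ.symm '' cubeProd k (d - k) P := by rw [← hfA, φ.image_symm, φ.preimage_image]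
  have hp : φ ζ ∈ cubeProd k (d - k) P := hfA ▸ mem_image_of_mem φ hζ
  set s := min 1 (t / (r * (√d + 1)))
  have hs0 : 0 < s := lt_min one_pos (by positivity)
  have hst : r * s * √d ≤ t :=
    calc r * s * √d ≤ r * (t / (r * (√d + 1))) * (√d + 1) := by
          gcongr
          · exact min_le_right _ _
          · exact le_add_of_nonneg_right zero_le_one
      _ = t := by field_simp
  refine ⟨_, hA ▸ isFlatCube_image_boxMap hkd ⟨r, hr, hφ⟩ hp hs0 (min_le_left _ _), ?_⟩
  obtain ⟨x₀, hx₀, hx₀ζ⟩ : WithLp.toLp 2 ((φ ζ).fst, cubeCenter (d - k)) ∈ e '' unitCube d := by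
    rw [image_splitEquiv_unitCube, mem_cubeProd]
    exact ⟨(mem_cubeProd.1 hp).1, cubeCenter_mem_unitCube⟩
  set h := φ.symm ∘ boxMap (φ ζ) s ∘ e
  have hh : ∀ x y, dist (h x) (h y) = r * s * dist x y := fun x y => by
    simp only [h, Function.comp, hφ, dist_boxMap hs0.le, e.dist_map, mul_assoc]
  have hhx₀ : h x₀ = ζ := by simp [h, hx₀ζ, boxMap_anchor]
  rintro _ ⟨x, hx, rfl⟩
  rw [mem_closedBall, ← hhx₀, hh]
  calc r * s * dist x x₀ ≤ r * s * √d := by gcongr; exact dist_le_sqrt_of_mem_unitCube hx hx₀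
    _ ≤ t := hst

section WordMap

variable {X ι : Type*} (S : ι → X → X)

def wordMap (σ : List ι) : X → X :=
  σ.foldr (fun i g => S i ∘ g) id

@[simp]
theorem wordMap_nil : wordMap S [] = id :=
  rfl

@[simp]
theorem wordMap_cons (i : ι) (σ : List ι) : wordMap S (i :: σ) = S i ∘ wordMap S σ :=
  rfl

variable {S}

theorem mapsTo_wordMap {A : Set X} (h : ∀ i, MapsTo (S i) A A) (σ : List ι) :
    MapsTo (wordMap S σ) A A := by
  induction σ with
  | nil => exact mapsTo_id A
  | cons i σ ih => exact (h i).comp ih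

theorem isSimilarity_wordMap [MetricSpace X] (h : ∀ i, IsSimilarity (S i)) (σ : List ι) :
    IsSimilarity (wordMap S σ) := by
  induction σ with
  | nil => exact IsSimilarity.id
  | cons i σ ih => exact (h i).comp ih

theorem lipschitzWith_wordMap [PseudoEMetricSpace X] {c : ℝ≥0} (h : ∀ i, LipschitzWith c (S i))
    (σ : List ι) : LipschitzWith (c ^ σ.length) (wordMap S σ) := by
  induction σ with
  | nil => simpa using LipschitzWith.id
  | cons i σ ih => simpa [pow_succ'] using (h i).comp ih

theorem exists_length_eq_mem_image_wordMap {K : Set X} (hK : K ⊆ ⋃ i, S i '' K) (n : ℕ) {p : X}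
    (hp : p ∈ K) : ∃ σ : List ι, σ.length = n ∧ p ∈ wordMap S σ '' K := by
  induction n generalizing p with
  | zero => exact ⟨[], rfl, p, hp, rfl⟩
  | succ n ih =>
    obtain ⟨i, q, hq, rfl⟩ := mem_iUnion.1 (hK hp)
    obtain ⟨σ, hσ, x, hx, rfl⟩ := ih hq
    exact ⟨i :: σ, by simp [hσ], x, hx, rfl⟩

theorem exists_wordMap_image_subset_ball [PseudoMetricSpace X] {K B : Set X}
    (hK : K ⊆ ⋃ i, S i '' K) {c : ℝ≥0} (hc : c < 1) (hS : ∀ i, LipschitzWith c (S i))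
    (hB : IsBounded B) (hKB : K ⊆ B) {p : X} (hp : p ∈ K) {η : ℝ} (hη : 0 < η) :
    ∃ σ, wordMap S σ '' B ⊆ ball p η := by
  have hlim : Tendsto (fun n => (c : ℝ) ^ n * diam B) atTop (𝓝 0) := by
    simpa using (tendsto_pow_atTop_nhds_zero_of_lt_one c.2 hc).mul_const (diam B)
  obtain ⟨n, hn⟩ := (hlim.eventually (gt_mem_nhds hη)).exists
  obtain ⟨σ, rfl, q, hq, rfl⟩ := exists_length_eq_mem_image_wordMap hK n hp
  refine ⟨σ, ?_⟩
  rintro _ ⟨b, hb, rfl⟩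
  calc dist (wordMap S σ b) (wordMap S σ q) ≤ c ^ σ.length * dist b q := by
        simpa using (lipschitzWith_wordMap hS σ).dist_le_mul b q
    _ ≤ c ^ σ.length * diam B := by gcongr; exact dist_le_diam_of_mem hB hb (hKB hq)
    _ < η := hn

theorem subset_closure_of_mapsTo [PseudoMetricSpace X] {K O : Set X}
    (hK : K ⊆ ⋃ i, S i '' K) {c : ℝ≥0} (hc : c < 1) (hS : ∀ i, LipschitzWith c (S i))
    (hKb : IsBounded K) (hO : ∀ i, MapsTo (S i) O O) {z : X} (hz : z ∈ K ∩ O) : K ⊆ closure O := by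
  intro p hp
  refine Metric.mem_closure_iff.2 fun η hη => ?_
  obtain ⟨σ, hσ⟩ := exists_wordMap_image_subset_ball hK hc hS hKb subset_rfl hp hη
  exact ⟨wordMap S σ z, mapsTo_wordMap hO σ hz.2, mem_ball'.1 (hσ (mem_image_of_mem _ hz.1))⟩

variable [TopologicalSpace X] {K O : Set X}

theorem inter_image_subset_image_of_pairwise_disjoint (hK : K ⊆ ⋃ i, S i '' K)
    (hKO : K ⊆ closure O) (hO : IsOpen O) (hS : ∀ i, IsOpenEmbedding (S i))
    (hdisj : Pairwise fun i j => Disjoint (S i '' O) (S j '' O)) (i : ι) :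
    K ∩ S i '' O ⊆ S i '' K := by
  rintro p ⟨hpK, hpO⟩
  obtain ⟨j, hj⟩ := mem_iUnion.1 (hK hpK)
  obtain rfl : j = i := by
    by_contra hji
    obtain ⟨q, hq, rfl⟩ := hj
    have hcl : S j q ∈ closure (S j '' O) :=
      image_closure_subset_closure_image (hS j).continuous ⟨q, hKO hq, rfl⟩
    exact disjoint_left.1 ((hdisj hji).closure_left ((hS i).isOpenMap O hO)) hcl hpO
  exact hj

theorem inter_image_wordMap_subset (hK : K ⊆ ⋃ i, S i '' K) (hKO : K ⊆ closure O) (hO : IsOpen O)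
    (hS : ∀ i, IsOpenEmbedding (S i)) (hdisj : Pairwise fun i j => Disjoint (S i '' O) (S j '' O))
    (hSO : ∀ i, MapsTo (S i) O O) (σ : List ι) : K ∩ wordMap S σ '' O ⊆ wordMap S σ '' K := by
  induction σ with
  | nil => simp
  | cons i σ ih =>
    rintro _ ⟨hpK, q, hq, rfl⟩
    obtain ⟨x, hxK, hx⟩ := inter_image_subset_image_of_pairwise_disjoint hK hKO hO hS hdisj i
      ⟨hpK, wordMap S σ q, mapsTo_wordMap hSO σ hq, rfl⟩
    rw [(hS i).injective hx] at hxK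
    rw [wordMap_cons, image_comp]
    exact mem_image_of_mem (S i) (ih ⟨hxK, q, hq, rfl⟩)

end WordMap

theorem image_inter_eq_of_inter_image_subset {α β : Type*} {f : α → β} (hf : Function.Injective f)
    {K A U : Set α} {L : Set β} (hK : MapsTo f K L) (hAU : A ⊆ U) (hU : L ∩ f '' U ⊆ f '' K) :
    f '' (A ∩ K) = f '' A ∩ L := by
  rw [image_inter hf]
  refine Subset.antisymm (inter_subset_inter_right _ hK.image_subset) ?_
  rintro _ ⟨hpA, hpL⟩
  exact ⟨hpA, hU ⟨hpL, image_mono hAU hpA⟩⟩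

section Propagation

variable {d k : ℕ} {ι : Type*} {T : ι → EuclideanSpace ℝ (Fin d) → EuclideanSpace ℝ (Fin d)}
  {K U C : Set (EuclideanSpace ℝ (Fin d))}

theorem exists_isFlatCube_subset_of_similarities (hkd : k ≤ d) (hT : ∀ τ, IsSimilarity (T τ))
    (hTK : ∀ τ, MapsTo (T τ) K K) (hTU : ∀ τ, K ∩ T τ '' U ⊆ T τ '' K) (hU : IsOpen U)
    {z : EuclideanSpace ℝ (Fin d)} (hz : z ∈ U ∩ K)
    (hdense : ∀ p ∈ K, ∀ η > 0, ∃ τ, T τ '' U ⊆ ball p η) (hCK : (interior C ∩ K).Nonempty)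
    (hflat : IsKFlatSet d k (C ∩ K)) : ∃ D ⊆ U, IsFlatCube k K D := by
  obtain ⟨w, hwC, hwK⟩ := hCK
  obtain ⟨η, hη, hwη⟩ := isOpen_iff.1 isOpen_interior w hwC
  obtain ⟨τ, hτ⟩ := hdense w hwK η hη
  have hτC : T τ '' U ⊆ C := hτ.trans (hwη.trans interior_subset)
  have hζ : T τ z ∈ T τ '' U := mem_image_of_mem _ hz.1
  obtain ⟨t, ht, htU⟩ := isOpen_iff.1 (((hT τ).isOpenEmbedding rfl).isOpenMap U hU) _ hζ
  obtain ⟨D, hD, hDt⟩ :=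
    hflat.exists_isFlatCube_subset_closedBall hkd ⟨hτC hζ, hTK τ hz.2⟩ (half_pos ht)
  have hDU : D ⊆ T τ '' U := hDt.trans ((closedBall_subset_ball (half_lt_self ht)).trans htU)
  obtain ⟨φ, hφ, hφsymm⟩ := (hT τ).exists_homeomorph rfl
  have hD₀U : φ.symm '' D ⊆ U := by
    refine (image_mono (hφ ▸ hDU)).trans ?_
    rw [φ.image_symm, φ.preimage_image]
  refine ⟨φ.symm '' D, hD₀U, (hD.of_subset (hDU.trans hτC)).image hφsymm ?_⟩
  have hcyl := image_inter_eq_of_inter_image_subset (hT τ).injective (hTK τ) hD₀U (hTU τ)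
  rw [← hφ, φ.image_symm, φ.image_preimage] at hcyl
  rw [← hcyl, φ.image_symm, φ.preimage_image]

theorem exists_isFlatCube_subset_closedBall_of_similarities (hkd : k ≤ d)
    (hT : ∀ τ, IsSimilarity (T τ)) (hTK : ∀ τ, MapsTo (T τ) K K)
    (hTU : ∀ τ, K ∩ T τ '' U ⊆ T τ '' K) (hU : IsOpen U)
    {z : EuclideanSpace ℝ (Fin d)} (hz : z ∈ U ∩ K)
    (hdense : ∀ p ∈ K, ∀ η > 0, ∃ τ, T τ '' U ⊆ ball p η) (hCK : (interior C ∩ K).Nonempty)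
    (hflat : IsKFlatSet d k (C ∩ K)) {y : EuclideanSpace ℝ (Fin d)} (hy : y ∈ K) {δ : ℝ}
    (hδ : 0 < δ) : ∃ C', IsFlatCube k K C' ∧ C' ⊆ closedBall y δ := by
  obtain ⟨D, hDU, hD⟩ :=
    exists_isFlatCube_subset_of_similarities hkd hT hTK hTU hU hz hdense hCK hflat
  obtain ⟨σ, hσ⟩ := hdense y hy δ hδ
  refine ⟨T σ '' D, hD.image (hT σ) ?_, (image_mono hDU).trans (hσ.trans ball_subset_closedBall)⟩
  exact image_inter_eq_of_inter_image_subset (hT σ).injective (hTK σ) hDU (hTU σ)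

end Propagation

theorem exists_lipschitzWith_lt_one {X ι : Type*} [PseudoMetricSpace X] [Fintype ι]
    {S : ι → X → X} (h : ∀ i, ∃ r : ℝ, r < 1 ∧ ∀ x y, dist (S i x) (S i y) ≤ r * dist x y) :
    ∃ c : ℝ≥0, c < 1 ∧ ∀ i, LipschitzWith c (S i) := by
  choose r hr hS using h
  refine ⟨Finset.univ.sup fun i => (r i).toNNReal,
    (Finset.sup_lt_iff zero_lt_one).2 fun i _ => Real.toNNReal_lt_one.2 (hr i),
    fun i => LipschitzWith.of_dist_le_mul fun x y => ?_⟩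
  calc dist (S i x) (S i y) ≤ r i * dist x y := hS i x y
    _ ≤ (r i).toNNReal * dist x y := by gcongr; exact Real.le_coe_toNNReal _
    _ ≤ _ := by
      gcongr
      exact_mod_cast Finset.le_sup (f := fun i => (r i).toNNReal) (Finset.mem_univ i)

theorem stmt8_general {d N k : ℕ} (hkd : k ≤ d)
    (S : Fin N → EuclideanSpace ℝ (Fin d) → EuclideanSpace ℝ (Fin d))
    (hS : ∀ i, ∃ r : ℝ, 0 < r ∧ r < 1 ∧
      ∀ x y, dist (S i x) (S i y) = r * dist x y)
    (K O : Set (EuclideanSpace ℝ (Fin d)))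
    (hK : IsCompact K) (hattr : K = ⋃ i, S i '' K)
    (hOopen : IsOpen O)
    (hOfeas : (⋃ i, S i '' O) ⊆ O)
    (hOdisj : Pairwise fun i j => Disjoint (S i '' O) (S j '' O))
    (hSOSC : (K ∩ O).Nonempty)
    (x : EuclideanSpace ℝ (Fin d))
    (C : Set (EuclideanSpace ℝ (Fin d)))
    (hCint : (interior C ∩ K).Nonempty)
    (hflat : IsKFlatSet d k (C ∩ K)) :
    ∀ y ∈ K, ∀ δ > 0, ∃ C' : Set (EuclideanSpace ℝ (Fin d)),
      IsClosedCube C' ∧ C' ⊆ closedBall y δ ∧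
      (interior C' ∩ K).Nonempty ∧ IsKFlatSet d k (C' ∩ K) := by
  intro y hy δ hδ
  have hSsim : ∀ i, IsSimilarity (S i) := fun i =>
    let ⟨r, hr, _, hSr⟩ := hS i
    ⟨r, hr, hSr⟩
  obtain ⟨c, hc, hSc⟩ := exists_lipschitzWith_lt_one fun i =>
    let ⟨r, _, hr, hSr⟩ := hS i
    ⟨r, hr, fun x y => (hSr x y).le⟩
  have hSK : ∀ i, MapsTo (S i) K K := fun i =>
    mapsTo_iff_image_subset.2 ((subset_iUnion (fun j => S j '' K) i).trans hattr.ge)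
  have hSO : ∀ i, MapsTo (S i) O O := fun i =>
    mapsTo_iff_image_subset.2 ((subset_iUnion (fun j => S j '' O) i).trans hOfeas)
  obtain ⟨z, hzK, hzO⟩ := hSOSC
  obtain ⟨ρ, hρ, hzρ⟩ := isOpen_iff.1 hOopen z hzO
  have hKO : K ⊆ closure O := subset_closure_of_mapsTo hattr.le hc hSc hK.isBounded hSO ⟨hzK, hzO⟩
  have hcyl : ∀ σ, K ∩ wordMap S σ '' ball z ρ ⊆ wordMap S σ '' K := fun σ =>
    (inter_subset_inter_right K (image_mono hzρ)).trans <| inter_image_wordMap_subset hattr.le hKO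
      hOopen (fun i => (hSsim i).isOpenEmbedding rfl) hOdisj hSO σ
  have hdense : ∀ p ∈ K, ∀ η > 0, ∃ σ, wordMap S σ '' ball z ρ ⊆ ball p η := fun p hp η hη =>
    (exists_wordMap_image_subset_ball hattr.le hc hSc (hK.isBounded.union isBounded_ball)
      subset_union_left hp hη).imp fun σ hσ => (image_mono subset_union_right).trans hσ
  obtain ⟨C', ⟨hC', hint, hflat'⟩, hC'y⟩ := exists_isFlatCube_subset_closedBall_of_similarities hkd
    (isSimilarity_wordMap hSsim) (mapsTo_wordMap hSK) hcyl isOpen_ball ⟨mem_ball_self hρ, hzK⟩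
    hdense hCint hflat hy hδ
  exact ⟨C', hC', hC'y, hint, hflat'⟩

/-- If a self-similar set `K` (attractor of contracting similarities satisfying the
strong open set condition) admits one point `x ∈ K`, one scale `ε > 0` and one cube
`C ⊆ B(x,ε)` with `C° ∩ K ≠ ∅` and `C ∩ K` similar to `[0,1]^k × P`, then around
every `y ∈ K` and at every scale `δ > 0` there is such a cube. -/
theorem stmt8 {d N k : ℕ} (hN : 2 ≤ N) (hk : 1 ≤ k) (hkd : k ≤ d)
    (S : Fin N → EuclideanSpace ℝ (Fin d) → EuclideanSpace ℝ (Fin d))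
    (hS : ∀ i, ∃ r : ℝ, 0 < r ∧ r < 1 ∧
      ∀ x y, dist (S i x) (S i y) = r * dist x y)
    (K O : Set (EuclideanSpace ℝ (Fin d)))
    (hK : IsCompact K) (hKne : K.Nonempty) (hattr : K = ⋃ i, S i '' K)
    (hOopen : IsOpen O) (hOne : O.Nonempty)
    (hOfeas : (⋃ i, S i '' O) ⊆ O)
    (hOdisj : Pairwise fun i j => Disjoint (S i '' O) (S j '' O))
    (hSOSC : (K ∩ O).Nonempty)
    (x : EuclideanSpace ℝ (Fin d)) (hx : x ∈ K) (ε : ℝ) (hε : 0 < ε)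
    (C : Set (EuclideanSpace ℝ (Fin d)))
    (hC : IsClosedCube C) (hCB : C ⊆ closedBall x ε)
    (hCint : (interior C ∩ K).Nonempty)
    (hflat : IsKFlatSet d k (C ∩ K)) :
    ∀ y ∈ K, ∀ δ > 0, ∃ C' : Set (EuclideanSpace ℝ (Fin d)),
      IsClosedCube C' ∧ C' ⊆ closedBall y δ ∧
      (interior C' ∩ K).Nonempty ∧ IsKFlatSet d k (C' ∩ K) :=
  stmt8_general hkd S hS K O hK hattr hOopen hOfeas hOdisj hSOSC x C hCint hflat
end

section
/- Let K ⊂ ℝ^d be a self-similar set satisfying the open set condition, and suppose K is locally k-flat, witnessed by a closed cube C with C°∩K ≠ ∅ and C∩K similar to [0,1]^k × P. Then there exists a similarity ψ of ℝ^d such that K ⊆ ψ(C ∩ K). -/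
/-!
Composing the contractions along a word of length `n` yields a similarity `f` with
`f(K) ⊆ K` and ratio at most `ρ ^ n`, where `ρ < 1` bounds all the ratios; following a
point of `interior C ∩ K` down the words makes `f(K)` land in `interior C`. Since a
similarity of `ℝ^d` is bijective (Mazur–Ulam and finite dimension), `ψ = f⁻¹` works.
-/

open Metric Set

open Metric Set

/-- Local k-flatness of a set `K ⊆ ℝ^d`. -/
def LocallyKFlat (d k : ℕ) (K : Set (EuclideanSpace ℝ (Fin d))) : Prop :=
  ∀ x ∈ K, ∀ ε > 0, ∃ C : Set (EuclideanSpace ℝ (Fin d)),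
    IsClosedCube C ∧ C ⊆ closedBall x ε ∧ (interior C ∩ K).Nonempty ∧
    IsKFlatSet d k (C ∩ K)

theorem Isometry.surjective_of_finiteDimensional {E : Type*} [NormedAddCommGroup E]
    [NormedSpace ℝ E] [StrictConvexSpace ℝ E] [FiniteDimensional ℝ E] {f : E → E}
    (hf : Isometry f) : Function.Surjective f := by
  let A := hf.affineIsometryOfStrictConvexSpace
  have hlin : Function.Surjective A.linear :=
    LinearMap.injective_iff_surjective.1 A.linearIsometry.injective
  exact (AffineMap.linear_surjective_iff A.toAffineMap).1 hlin

namespace IsSimilarity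

variable {X : Type*} [MetricSpace X]

theorem injective_s9 {f : X → X} (hf : IsSimilarity f) : Function.Injective f := by
  obtain ⟨r, hr, hf⟩ := hf
  intro x y hxy
  have h := hf x y
  rw [hxy, dist_self, eq_comm, mul_eq_zero] at h
  exact dist_eq_zero.1 (h.resolve_left hr.ne')

variable {E : Type*} [NormedAddCommGroup E] [NormedSpace ℝ E] [StrictConvexSpace ℝ E]
  [FiniteDimensional ℝ E]

theorem surjective {f : E → E} (hf : IsSimilarity f) : Function.Surjective f := by
  obtain ⟨r, hr, hf⟩ := hf
  have hiso : Isometry fun x => r⁻¹ • f x := Isometry.of_dist_eq fun x y => by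
    rw [dist_smul₀, hf, Real.norm_of_nonneg (inv_nonneg.2 hr.le), inv_mul_cancel_left₀ hr.ne']
  intro y
  obtain ⟨x, hx⟩ := hiso.surjective_of_finiteDimensional (r⁻¹ • y)
  exact ⟨x, smul_right_injective E (inv_ne_zero hr.ne') hx⟩

theorem exists_leftInverse {f : E → E} (hf : IsSimilarity f) :
    ∃ g : E → E, IsSimilarity g ∧ Function.LeftInverse g f := by
  obtain ⟨g, hgf, hfg⟩ := Function.bijective_iff_has_inverse.1 ⟨hf.injective_s9, hf.surjective⟩
  obtain ⟨r, hr, hf⟩ := hf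
  refine ⟨g, ⟨r⁻¹, inv_pos.2 hr, fun x y => ?_⟩, hgf⟩
  rw [← hfg x, ← hfg y, hf, hgf, hgf, inv_mul_cancel_left₀ hr.ne']

end IsSimilarity

section SelfSimilar

variable {X ι : Type*} [MetricSpace X] {φ : ι → X → X} {K : Set X}

theorem exists_cylinder_ratio_le_pow {ρ : ℝ}
    (hφ : ∀ i, ∃ r : ℝ, 0 < r ∧ r ≤ ρ ∧ ∀ x y, dist (φ i x) (φ i y) = r * dist x y)
    (hattr : K = ⋃ i, φ i '' K) {x : X} (hx : x ∈ K) (n : ℕ) :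
    ∃ f : X → X, ∃ s : ℝ, 0 < s ∧ s ≤ ρ ^ n ∧ (∀ a b, dist (f a) (f b) = s * dist a b) ∧
      x ∈ f '' K ∧ f '' K ⊆ K := by
  induction n with
  | zero => exact ⟨id, 1, one_pos, by simp, by simp, ⟨x, hx, rfl⟩, by simp⟩
  | succ n ih =>
    obtain ⟨f, s, hs, hsρ, hf, hxf, hfK⟩ := ih
    obtain ⟨y, hy, rfl⟩ := hxf
    rw [hattr, mem_iUnion] at hy
    obtain ⟨i, z, hz, rfl⟩ := hy
    obtain ⟨r, hr, hrρ, hφi⟩ := hφ i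
    refine ⟨f ∘ φ i, s * r, mul_pos hs hr, ?_, fun a b => by simp only [Function.comp, hf, hφi,
      mul_assoc], ⟨z, hz, rfl⟩, ?_⟩
    · rw [pow_succ]
      exact mul_le_mul hsρ hrρ hr.le (pow_nonneg (hr.le.trans hrρ) n)
    · rw [image_comp]
      exact (image_mono ((subset_iUnion (fun j => φ j '' K) i).trans hattr.superset)).trans hfK

open Filter Topology in
theorem exists_similarity_image_subset_inter_ball [Finite ι]
    (hφ : ∀ i, ∃ r : ℝ, 0 < r ∧ r < 1 ∧ ∀ x y, dist (φ i x) (φ i y) = r * dist x y)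
    (hK : Bornology.IsBounded K) (hattr : K = ⋃ i, φ i '' K) {x : X} (hx : x ∈ K)
    {ε : ℝ} (hε : 0 < ε) : ∃ f : X → X, IsSimilarity f ∧ f '' K ⊆ K ∩ ball x ε := by
  choose r hr hr1 hφr using hφ
  obtain ⟨ρ, hρr, hρ1⟩ : ∃ ρ, (∀ i, r i ≤ ρ) ∧ ρ < 1 :=
    ((eventually_all.2 fun i => eventually_ge_nhds (hr1 i)).filter_mono nhdsWithin_le_nhds
      |>.and self_mem_nhdsWithin).exists (f := 𝓝[<] (1 : ℝ))
  have hD : 0 < diam K + 1 := by positivity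
  obtain ⟨n, hn⟩ := exists_pow_lt_of_lt_one (div_pos hε hD) hρ1
  obtain ⟨f, s, hs, hsρ, hf, ⟨y, hy, rfl⟩, hfK⟩ :=
    exists_cylinder_ratio_le_pow (fun i => ⟨r i, hr i, hρr i, hφr i⟩) hattr hx n
  refine ⟨f, ⟨s, hs, hf⟩, subset_inter hfK ?_⟩
  rintro _ ⟨a, ha, rfl⟩
  rw [mem_ball, hf]
  calc s * dist a y ≤ ρ ^ n * (diam K + 1) :=
        mul_le_mul hsρ (by linarith [dist_le_diam_of_mem hK ha hy]) dist_nonneg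
          (hs.le.trans hsρ)
    _ < ε / (diam K + 1) * (diam K + 1) := mul_lt_mul_of_pos_right hn hD
    _ = ε := div_mul_cancel₀ ε hD.ne'

end SelfSimilar

theorem stmt9_general {d N : ℕ}
    (φ : Fin N → EuclideanSpace ℝ (Fin d) → EuclideanSpace ℝ (Fin d))
    (hφ : ∀ i, ∃ r : ℝ, 0 < r ∧ r < 1 ∧
      ∀ x y, dist (φ i x) (φ i y) = r * dist x y)
    (K : Set (EuclideanSpace ℝ (Fin d)))
    (hK : IsCompact K) (hattr : K = ⋃ i, φ i '' K)
    (C : Set (EuclideanSpace ℝ (Fin d)))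
    (hCint : (interior C ∩ K).Nonempty) :
    ∃ ψ : EuclideanSpace ℝ (Fin d) → EuclideanSpace ℝ (Fin d),
      IsSimilarity ψ ∧ K ⊆ ψ '' (C ∩ K) := by
  obtain ⟨x, hxC, hxK⟩ := hCint
  obtain ⟨ε, hε, hball⟩ := Metric.isOpen_iff.1 isOpen_interior x hxC
  obtain ⟨f, hf, hfK⟩ :=
    exists_similarity_image_subset_inter_ball hφ hK.isBounded hattr hxK hε
  obtain ⟨ψ, hψ, hψf⟩ := hf.exists_leftInverse
  refine ⟨ψ, hψ, fun a ha => ⟨f a, ?_, hψf a⟩⟩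
  obtain ⟨haK, hab⟩ := hfK (mem_image_of_mem f ha)
  exact ⟨interior_subset (hball hab), haK⟩

/-- If a self-similar set `K` satisfying the open set condition is locally
`k`-flat, witnessed by a cube `C`, then there is a similarity `ψ` with
`K ⊆ ψ(C ∩ K)`. -/
theorem stmt9 {d N k : ℕ} (hN : 2 ≤ N) (hk : 1 ≤ k) (hkd : k ≤ d)
    (φ : Fin N → EuclideanSpace ℝ (Fin d) → EuclideanSpace ℝ (Fin d))
    (hφ : ∀ i, ∃ r : ℝ, 0 < r ∧ r < 1 ∧
      ∀ x y, dist (φ i x) (φ i y) = r * dist x y)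
    (K O : Set (EuclideanSpace ℝ (Fin d)))
    (hK : IsCompact K) (hKne : K.Nonempty) (hattr : K = ⋃ i, φ i '' K)
    (hOopen : IsOpen O) (hOne : O.Nonempty)
    (hOfeas : (⋃ i, φ i '' O) ⊆ O)
    (hOdisj : Pairwise fun i j => Disjoint (φ i '' O) (φ j '' O))
    (hLF : LocallyKFlat d k K)
    (C : Set (EuclideanSpace ℝ (Fin d)))
    (hC : IsClosedCube C) (hCint : (interior C ∩ K).Nonempty)
    (hflat : IsKFlatSet d k (C ∩ K)) :
    ∃ ψ : EuclideanSpace ℝ (Fin d) → EuclideanSpace ℝ (Fin d),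
      IsSimilarity ψ ∧ K ⊆ ψ '' (C ∩ K) :=
  stmt9_general φ hφ K hK hattr C hCint
end

section
/- Let φ₁,…,φ_N be contracting similarities on ℝ^d with the open set condition (feasible open set O), attractor K, and suppose B ⊂ O is an open set with ∂B ⊂ K. Then for every finite word ω over {1,…,N}, K_ε ∩ φ_ω(B) = (φ_ω(K))_ε ∩ φ_ω(B) for every ε > 0 such that the sets φ_σ(O) for words σ of the same length as ω are pairwise disjoint (which holds automatically by OSC). -/
open Metric Set

/-- The composition `φ_ω = φ_{ω₁} ∘ ⋯ ∘ φ_{ω_n}` of an IFS along a finite word. -/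
def iterMap {d N : ℕ}
    (φ : Fin N → EuclideanSpace ℝ (Fin d) → EuclideanSpace ℝ (Fin d)) :
    List (Fin N) → EuclideanSpace ℝ (Fin d) → EuclideanSpace ℝ (Fin d)
  | [] => id
  | i :: ω => φ i ∘ iterMap φ ω

/-!
Let `x ∈ φ_ω(B)` and `y ∈ K`. If `y ∈ φ_ω(B) ⊆ φ_ω(O)`, then `y ∈ φ_ω(K)`: `y` lies in some
cylinder `φ_σ(K) ⊆ closure φ_σ(O)` with `|σ| = |ω|`, and for `σ ≠ ω` the closure of `φ_σ(O)`
misses the open set `φ_ω(O)`. Otherwise the segment `[x, y]` leaves `φ_ω(B)` through a point of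
`∂φ_ω(B) = φ_ω(∂B) ⊆ φ_ω(K)`, which is no farther from `x` than `y`. Hence on `φ_ω(B)` the
distance to `φ_ω(K)` equals the distance to `K`.
-/

theorem isHomeomorph_of_dist_eq_mul {E : Type*} [NormedAddCommGroup E] [NormedSpace ℝ E]
    [StrictConvexSpace ℝ E] [FiniteDimensional ℝ E] {f : E → E} {r : ℝ} (hr : 0 < r)
    (hf : ∀ x y, dist (f x) (f y) = r * dist x y) : IsHomeomorph f := by
  have hg : Isometry fun x : E => f (r⁻¹ • x) := Isometry.of_dist_eq fun x y => by
    rw [hf, dist_smul₀, Real.norm_eq_abs, abs_of_pos (inv_pos.2 hr), mul_inv_cancel_left₀ hr.ne']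
  have hfg : f = (fun x : E => f (r⁻¹ • x)) ∘ fun x => r • x := by
    funext x
    simp [inv_smul_smul₀ hr.ne']
  rw [hfg]
  have : Inhabited E := ⟨0⟩
  exact (hg.affineIsometryOfStrictConvexSpace.toAffineIsometryEquiv rfl).toHomeomorph.isHomeomorph
    |>.comp (Homeomorph.smulOfNeZero r hr.ne').isHomeomorph

theorem IsPreconnected.inter_frontier_nonempty {X : Type*} [TopologicalSpace X] {s U : Set X}
    (hs : IsPreconnected s) (hsU : (s ∩ U).Nonempty) (hsU' : (s \ U).Nonempty) :
    (s ∩ frontier U).Nonempty := by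
  by_contra! h
  have hcover : s ⊆ interior U ∪ (closure U)ᶜ := fun z hz => by
    by_contra! hz'
    exact h.subset ⟨hz, not_not.1 (not_or.1 hz').2, (not_or.1 hz').1⟩
  obtain ⟨x, hxs, hxU⟩ := hsU
  obtain ⟨y, hys, hyU⟩ := hsU'
  have hxU' : x ∈ interior U := (hcover hxs).resolve_right (not_not.2 (subset_closure hxU))
  exact hyU (interior_subset (hs.subset_left_of_subset_union isOpen_interior
    isClosed_closure.isOpen_compl (disjoint_compl_right.mono_left interior_subset_closure)
    hcover ⟨x, hxs, hxU'⟩ hys))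

theorem cthickening_inter_eq_of_frontier_subset {E : Type*} [NormedAddCommGroup E]
    [NormedSpace ℝ E] {K T U : Set E} (hTK : T ⊆ K) (hUT : frontier U ⊆ T) (hKU : K ∩ U ⊆ T)
    (ε : ℝ) : cthickening ε K ∩ U = cthickening ε T ∩ U := by
  refine Subset.antisymm ?_ (inter_subset_inter_left _ (cthickening_subset_of_subset ε hTK))
  rintro x ⟨hxK, hxU⟩
  refine ⟨mem_cthickening_iff.2 (le_trans ?_ (mem_cthickening_iff.1 hxK)), hxU⟩
  refine le_infEDist.2 fun y hyK => ?_
  by_cases hyU : y ∈ U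
  · exact infEDist_le_edist_of_mem (hKU ⟨hyK, hyU⟩)
  obtain ⟨z, hz, hzU⟩ := (convex_segment x y).isPreconnected.inter_frontier_nonempty
    ⟨x, left_mem_segment ℝ x y, hxU⟩ ⟨y, right_mem_segment ℝ x y, hyU⟩
  calc infEDist x T ≤ edist x z := infEDist_le_edist_of_mem (hUT hzU)
    _ ≤ edist x y := by
      rw [edist_dist, edist_dist, ← dist_add_dist_of_mem_segment hz]
      exact ENNReal.ofReal_le_ofReal (le_add_of_nonneg_right dist_nonneg)

theorem LipschitzWith.infDist_apply_le {X : Type*} [PseudoMetricSpace X] {f : X → X} {c : NNReal}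
    (hf : LipschitzWith c f) {S : Set X} (hS : S.Nonempty) (hfS : f '' S ⊆ S) (x : X) :
    infDist (f x) S ≤ c * infDist x S := by
  have := hS.to_subtype
  rw [infDist_eq_iInf (x := x), Real.mul_iInf_of_nonneg c.coe_nonneg]
  exact le_ciInf fun s => (infDist_le_dist_of_mem (hfS (mem_image_of_mem f s.2))).trans
    (hf.dist_le_mul x s)

theorem subset_closure_of_eq_iUnion_image {ι X : Type*} [MetricSpace X] {φ : ι → X → X}
    (hφ : ∀ i, ∃ c, ContractingWith c (φ i)) {K S : Set X} (hK : IsCompact K)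
    (hattr : K = ⋃ i, φ i '' K) (hS : S.Nonempty) (hSφ : ∀ i, φ i '' S ⊆ S) :
    K ⊆ closure S := by
  rcases K.eq_empty_or_nonempty with rfl | hKne
  · exact empty_subset _
  -- the largest distance from `K` to `S` is contracted by some `φ i`, hence vanishes
  obtain ⟨x₀, hx₀K, hx₀⟩ := hK.exists_isMaxOn hKne (continuous_infDist_pt S).continuousOn
  obtain ⟨i, y, hyK, rfl⟩ := mem_iUnion.1 (hattr ▸ hx₀K)
  obtain ⟨c, hc1, hc⟩ := hφ i
  have hmax : infDist (φ i y) S = 0 := by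
    have := (hc.infDist_apply_le hS (hSφ i) y).trans
      (mul_le_mul_of_nonneg_left (hx₀ hyK) c.coe_nonneg)
    have hc1' : (c : ℝ) < 1 := hc1
    nlinarith [infDist_nonneg (x := φ i y) (s := S)]
  intro x hxK
  rw [mem_closure_iff_infDist_zero hS]
  exact le_antisymm (hmax ▸ hx₀ hxK) infDist_nonneg

section iterMap

variable {d N : ℕ} {φ : Fin N → EuclideanSpace ℝ (Fin d) → EuclideanSpace ℝ (Fin d)}
  {K O : Set (EuclideanSpace ℝ (Fin d))}

theorem isHomeomorph_iterMap (hφ : ∀ i, IsHomeomorph (φ i)) :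
    ∀ ω, IsHomeomorph (iterMap φ ω)
  | [] => IsHomeomorph.id
  | i :: ω => (hφ i).comp (isHomeomorph_iterMap hφ ω)

theorem iterMap_image_subset (hK : ∀ i, φ i '' K ⊆ K) : ∀ ω, iterMap φ ω '' K ⊆ K
  | [] => by simp [iterMap]
  | i :: ω => by
    rw [iterMap, image_comp]
    exact (image_mono (iterMap_image_subset hK ω)).trans (hK i)

theorem exists_length_eq_mem_iterMap_image (hattr : K = ⋃ i, φ i '' K) :
    ∀ n, ∀ x ∈ K, ∃ ω : List (Fin N), ω.length = n ∧ x ∈ iterMap φ ω '' K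
  | 0, x, hx => ⟨[], rfl, by simpa [iterMap] using hx⟩
  | n + 1, x, hx => by
    obtain ⟨i, y, hy, rfl⟩ := mem_iUnion.1 (hattr ▸ hx)
    obtain ⟨ω, hω, z, hz, rfl⟩ := exists_length_eq_mem_iterMap_image hattr n y hy
    exact ⟨i :: ω, by simp [hω], z, hz, rfl⟩

theorem disjoint_iterMap_image (hinj : ∀ i, Function.Injective (φ i)) (hO : ∀ i, φ i '' O ⊆ O)
    (hdisj : Pairwise fun i j => Disjoint (φ i '' O) (φ j '' O)) :
    ∀ {σ τ : List (Fin N)}, σ.length = τ.length → σ ≠ τ →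
      Disjoint (iterMap φ σ '' O) (iterMap φ τ '' O)
  | [], [], _, hne => (hne rfl).elim
  | i :: σ, j :: τ, hlen, hne => by
    simp only [iterMap, image_comp]
    obtain rfl | hij := eq_or_ne i j
    · exact (disjoint_image_iff (hinj i)).2
        (disjoint_iterMap_image hinj hO hdisj (Nat.succ.inj hlen) fun h => hne (h ▸ rfl))
    · exact (hdisj hij).mono (image_mono (iterMap_image_subset hO σ))
        (image_mono (iterMap_image_subset hO τ))

theorem inter_iterMap_image_subset (hφ : ∀ i, IsHomeomorph (φ i))
    (hattr : K = ⋃ i, φ i '' K) (hKO : K ⊆ closure O) (hOopen : IsOpen O)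
    (hO : ∀ i, φ i '' O ⊆ O) (hdisj : Pairwise fun i j => Disjoint (φ i '' O) (φ j '' O))
    (ω : List (Fin N)) : K ∩ iterMap φ ω '' O ⊆ iterMap φ ω '' K := by
  rintro y ⟨hyK, hyO⟩
  obtain ⟨σ, hσ, hyσ⟩ := exists_length_eq_mem_iterMap_image hattr ω.length y hyK
  obtain rfl | hne := eq_or_ne σ ω
  · exact hyσ
  have hyσO : y ∈ closure (iterMap φ σ '' O) :=
    (isHomeomorph_iterMap hφ σ).image_closure O ▸ image_mono hKO hyσ
  have hωσ := disjoint_iterMap_image (fun i => (hφ i).injective) hO hdisj hσ.symm hne.symm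
  exact ((hωσ.closure_right ((isHomeomorph_iterMap hφ ω).isOpenMap _ hOopen)).notMem_of_mem_left
    hyO hyσO).elim

end iterMap

theorem stmt14_general {d N : ℕ}
    (φ : Fin N → EuclideanSpace ℝ (Fin d) → EuclideanSpace ℝ (Fin d))
    (hφ : ∀ i, ∃ r : ℝ, 0 < r ∧ r < 1 ∧
      ∀ x y, dist (φ i x) (φ i y) = r * dist x y)
    (K O : Set (EuclideanSpace ℝ (Fin d)))
    (hK : IsCompact K) (hattr : K = ⋃ i, φ i '' K)
    (hOopen : IsOpen O) (hOne : O.Nonempty)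
    (hOfeas : (⋃ i, φ i '' O) ⊆ O)
    (hOdisj : Pairwise fun i j => Disjoint (φ i '' O) (φ j '' O))
    (B : Set (EuclideanSpace ℝ (Fin d)))
    (hBO : B ⊆ O) (hBK : frontier B ⊆ K) :
    ∀ ω : List (Fin N), ∀ ε > 0,
      Metric.cthickening ε K ∩ (iterMap φ ω '' B) =
        Metric.cthickening ε (iterMap φ ω '' K) ∩ (iterMap φ ω '' B) := by
  intro ω ε _
  choose r hr0 hr1 hrφ using hφ
  have hhomeo i : IsHomeomorph (φ i) := isHomeomorph_of_dist_eq_mul (hr0 i) (hrφ i)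
  have hcontr i : ∃ c, ContractingWith c (φ i) :=
    ⟨⟨r i, (hr0 i).le⟩, hr1 i, .of_dist_le_mul fun x y => (hrφ i x y).le⟩
  have hOφ : ∀ i, φ i '' O ⊆ O := iUnion_subset_iff.1 hOfeas
  have hKO : K ⊆ closure O := subset_closure_of_eq_iUnion_image hcontr hK hattr hOne hOφ
  refine cthickening_inter_eq_of_frontier_subset
    (iterMap_image_subset (iUnion_subset_iff.1 hattr.symm.le) ω) ?_ ?_ ε
  · rw [← (isHomeomorph_iterMap hhomeo ω).image_frontier]
    exact image_mono hBK
  · exact (inter_subset_inter_right K (image_mono hBO)).trans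
      (inter_iterMap_image_subset hhomeo hattr hKO hOopen hOφ hOdisj ω)

/-- Localization identity: if `K` is the attractor of contracting similarities
satisfying the open set condition with bounded feasible open set `O`, and `B ⊆ O`
is open with `∂B ⊆ K`, then for every finite word `ω` and every `ε > 0`,
`K_ε ∩ φ_ω(B) = (φ_ω(K))_ε ∩ φ_ω(B)`. -/
theorem stmt14 {d N : ℕ} (hN : 2 ≤ N)
    (φ : Fin N → EuclideanSpace ℝ (Fin d) → EuclideanSpace ℝ (Fin d))
    (hφ : ∀ i, ∃ r : ℝ, 0 < r ∧ r < 1 ∧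
      ∀ x y, dist (φ i x) (φ i y) = r * dist x y)
    (K O : Set (EuclideanSpace ℝ (Fin d)))
    (hK : IsCompact K) (hKne : K.Nonempty) (hattr : K = ⋃ i, φ i '' K)
    (hOopen : IsOpen O) (hOne : O.Nonempty) (hObdd : Bornology.IsBounded O)
    (hOfeas : (⋃ i, φ i '' O) ⊆ O)
    (hOdisj : Pairwise fun i j => Disjoint (φ i '' O) (φ j '' O))
    (B : Set (EuclideanSpace ℝ (Fin d)))
    (hBopen : IsOpen B) (hBO : B ⊆ O) (hBK : frontier B ⊆ K) :
    ∀ ω : List (Fin N), ∀ ε > 0,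
      Metric.cthickening ε K ∩ (iterMap φ ω '' B) =
        Metric.cthickening ε (iterMap φ ω '' K) ∩ (iterMap φ ω '' B) :=
  stmt14_general φ hφ K O hK hattr hOopen hOne hOfeas hOdisj B hBO hBK
end
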